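/- arXiv:2511.10378 — 4 statements merged into one kernel-verified Lean document; each statement's English description precedes it below -/
import Mathlib

section
/- Uniform a priori bounds for the finite volume approximations (Lemma 3.1). Assume (A1) and (A2), let T > 0, p ∈ L⁴(0,T; L²(0,1)), and v₀ ∈ L²(0,1). Then there exists a constant C₁ > 0, depending only on h, b, p, v₀, T and independent of n, such that for every integer n ≥ 3 the approximate solution v^{(n)} of the finite volume scheme satisfies sup_{t∈[0,T]} ‖v^{(n)}(t,·)‖²_{L²(0,1)} ≤ C₁ and ∫₀ᵀ ‖ṽ^{(n)}(t,·)‖²_{L²(0,1)} dt ≤ C₁. -/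
open MeasureTheory

/-- The average of `f` over the cell `V_i = [(i-1)Δx, iΔx)`, `Δx = 1/n`. -/
noncomputable def cellAvg (n : ℕ) (f : ℝ → ℝ) (i : ℕ) : ℝ :=
  (n : ℝ) * ∫ x in (((i:ℝ) - 1) / n)..((i:ℝ) / n), f x

/-- The numerical flux of the semi-discrete finite volume scheme:
`F_i(t) = (v_{i+1} − v_i)/Δx + b((v_i + v_{i+1})/2) p_i(t)` for `1 ≤ i ≤ n−1`
and `F_0 = F_n = 0`, where `Δx = 1/n` and `p_i` is the cell average of `p(t,·)`. -/
noncomputable def fvmFlux (n : ℕ) (b : ℝ → ℝ) (p : ℝ → ℝ → ℝ) (v : ℕ → ℝ → ℝ)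
    (i : ℕ) (t : ℝ) : ℝ :=
  if 1 ≤ i ∧ i ≤ n - 1 then
    (n : ℝ) * (v (i + 1) t - v i t)
      + b ((v i t + v (i + 1) t) / 2) * cellAvg n (fun x => p t x) i
  else 0

/-- `(v, d)` is the (C¹) solution of the semi-discrete finite volume scheme (OP):
`h'(v_i) v_i' = (1/Δx)(F_i − F_{i−1})` on `[0,T]` with `v_i(0)` the cell average of `v₀`. -/
def IsFVMSol (T : ℝ) (n : ℕ) (h' b : ℝ → ℝ) (p : ℝ → ℝ → ℝ) (v₀ : ℝ → ℝ)
    (v d : ℕ → ℝ → ℝ) : Prop :=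
  (∀ i ∈ Finset.Icc 1 n, ContinuousOn (d i) (Set.Icc 0 T)) ∧
  (∀ i ∈ Finset.Icc 1 n, ∀ t ∈ Set.Icc 0 T,
      HasDerivWithinAt (v i) (d i t) (Set.Icc 0 T) t ∧
      h' (v i t) * d i t
        = (n : ℝ) * (fvmFlux n b p v i t - fvmFlux n b p v (i - 1) t)) ∧
  (∀ i ∈ Finset.Icc 1 n, v i 0 = cellAvg n v₀ i)

open Finset

/-! The proof is an energy estimate. With `H(x) = ∫₀ˣ h'(s) s ds`, comparable to `x²` by (A1),
the discrete energy `E(t) = Δx ∑ᵢ H(vᵢ(t))` satisfies `E' = ∑ᵢ vᵢ (Fᵢ - Fᵢ₋₁) = -∑ᵢ (vᵢ₊₁ - vᵢ) Fᵢ`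
by summation by parts, the boundary fluxes being zero. Young's inequality on the drift part of
the flux and Jensen's inequality on the cell averages of `p` give
`E' ≤ -(1/(2Δx)) ∑ᵢ (vᵢ₊₁ - vᵢ)² + (C_{b,2}²/2) ‖p(t)‖²`, and integrating in time together with
`E(0) ≤ (C_{h,2}/2) ‖v₀‖²` bounds both quantities. -/

lemma sq_intervalIntegral_le {f : ℝ → ℝ} {a b : ℝ} (hab : a ≤ b)
    (hf2 : IntervalIntegrable (fun x => f x ^ 2) volume a b) :
    (∫ x in a..b, f x) ^ 2 ≤ (b - a) * ∫ x in a..b, f x ^ 2 := by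
  by_cases hf : IntervalIntegrable f volume a b
  · have hquad : ∀ c : ℝ, 0 ≤ (b - a) * (c * c) + (-2 * ∫ x in a..b, f x) * c
        + ∫ x in a..b, f x ^ 2 := by
      intro c
      have hexp : ∫ x in a..b, (f x - c) ^ 2
          = (∫ x in a..b, f x ^ 2) - 2 * c * (∫ x in a..b, f x) + c ^ 2 * (b - a) := by
        simp_rw [sub_sq]
        have hlin := (hf.const_mul 2).mul_const c
        rw [intervalIntegral.integral_add (hf2.sub hlin) intervalIntegrable_const,
          intervalIntegral.integral_sub hf2 hlin, intervalIntegral.integral_mul_const,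
          intervalIntegral.integral_const_mul, intervalIntegral.integral_const, smul_eq_mul]
        ring
      have := intervalIntegral.integral_nonneg (μ := volume) hab fun x _ => sq_nonneg (f x - c)
      linarith
    have := discrim_le_zero hquad
    rw [discrim] at this
    linarith
  · rw [intervalIntegral.integral_undef hf]
    have := intervalIntegral.integral_nonneg (μ := volume) hab fun x _ => sq_nonneg (f x)
    nlinarith

lemma IntervalIntegrable.of_sq_of_nonneg {f : ℝ → ℝ} {a b : ℝ} (hf : ∀ x, 0 ≤ f x)
    (hf2 : IntervalIntegrable (fun x => f x ^ 2) volume a b) : IntervalIntegrable f volume a b := by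
  have hmeas : AEStronglyMeasurable f (volume.restrict (Set.uIoc a b)) := by
    have := Real.continuous_sqrt.comp_aestronglyMeasurable hf2.aestronglyMeasurable_restrict_uIoc
    simpa [Function.comp_def, Real.sqrt_sq (hf _)] using this
  refine ((intervalIntegrable_const (c := (1:ℝ))).add hf2).div_const 2 |>.mono_fun' hmeas
    (ae_of_all _ fun x => ?_)
  simp only [Real.norm_of_nonneg (hf x)]
  nlinarith [sq_nonneg (f x - 1)]

lemma sum_Icc_mul_sub_eq_add (V F : ℕ → ℝ) (hF0 : F 0 = 0) (n : ℕ) :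
    ∑ i ∈ Icc 1 n, V i * (F i - F (i - 1))
      = V n * F n + ∑ i ∈ Icc 1 (n - 1), (V i - V (i + 1)) * F i := by
  induction n with
  | zero => simp [hF0]
  | succ n ih =>
    rw [sum_Icc_succ_top (by omega), ih]
    rcases n with _ | m
    · simp [hF0]
    · simp only [Nat.add_sub_cancel]
      rw [sum_Icc_succ_top (show 1 ≤ m + 1 by omega)]
      ring

lemma sum_Icc_mul_sub_eq (V F : ℕ → ℝ) {n : ℕ} (hF0 : F 0 = 0) (hFn : F n = 0) :
    ∑ i ∈ Icc 1 n, V i * (F i - F (i - 1))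
      = ∑ i ∈ Icc 1 (n - 1), (V i - V (i + 1)) * F i := by
  rw [sum_Icc_mul_sub_eq_add V F hF0, hFn, mul_zero, zero_add]

lemma sum_Icc_two_sq_div_eq (n : ℕ) (w : ℕ → ℝ) :
    (1 / (n : ℝ)) * ∑ i ∈ Icc 2 n, ((w i - w (i - 1)) / (1 / (n : ℝ))) ^ 2
      = n * ∑ i ∈ Icc 1 (n - 1), (w (i + 1) - w i) ^ 2 := by
  rcases Nat.eq_zero_or_pos n with rfl | hn
  · simp
  have hshift : ∑ i ∈ Icc 2 n, ((w i - w (i - 1)) / (1 / (n : ℝ))) ^ 2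
      = ∑ i ∈ Icc 1 (n - 1), ((w (i + 1) - w i) / (1 / (n : ℝ))) ^ 2 :=
    sum_nbij' (· - 1) (· + 1) (by simp; omega) (by simp; omega) (by simp; omega)
      (by simp) (fun i hi => by
        simp only [mem_Icc] at hi
        rw [Nat.sub_add_cancel (by omega)])
  rw [hshift, mul_sum, mul_sum]
  exact sum_congr rfl fun i _ => by field_simp

lemma neg_mul_add_le_young {N : ℝ} (hN : 0 < N) (Δ β : ℝ) :
    -Δ * (N * Δ + β) ≤ -(N / 2) * Δ ^ 2 + β ^ 2 / (2 * N) := by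
  have key : -(N / 2) * Δ ^ 2 + β ^ 2 / (2 * N) - -Δ * (N * Δ + β)
      = (N * Δ + β) ^ 2 / (2 * N) := by
    field_simp
    ring
  have : 0 ≤ (N * Δ + β) ^ 2 / (2 * N) := by positivity
  linarith

lemma cell_subset_unitInterval {n i : ℕ} (hi : i ∈ Icc 1 n) :
    Set.uIcc (((i:ℝ) - 1) / n) ((i:ℝ) / n) ⊆ Set.uIcc 0 1 := by
  rw [mem_Icc] at hi
  have hn : (0:ℝ) < n := by exact_mod_cast (hi.1.trans hi.2)
  have hi1 : (1:ℝ) ≤ i := by exact_mod_cast hi.1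
  have hin : (i:ℝ) ≤ n := by exact_mod_cast hi.2
  rw [Set.uIcc_of_le (by gcongr; linarith), Set.uIcc_of_le zero_le_one]
  exact Set.Icc_subset_Icc (div_nonneg (by linarith) hn.le) ((div_le_one hn).2 hin)

lemma cellAvg_nonneg (n i : ℕ) {f : ℝ → ℝ} (hf : ∀ x, 0 ≤ f x) : 0 ≤ cellAvg n f i :=
  mul_nonneg n.cast_nonneg (intervalIntegral.integral_nonneg
    (div_le_div_of_nonneg_right (by linarith) n.cast_nonneg) fun x _ => hf x)

lemma cellAvg_sq_le {n i : ℕ} (hi : i ∈ Icc 1 n) {f : ℝ → ℝ}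
    (hf : IntervalIntegrable (fun x => f x ^ 2) volume 0 1) :
    cellAvg n f i ^ 2 ≤ cellAvg n (fun x => f x ^ 2) i := by
  have hn : (0:ℝ) < n := by
    rw [mem_Icc] at hi
    exact_mod_cast (hi.1.trans hi.2)
  have hcs := sq_intervalIntegral_le (div_le_div_of_nonneg_right (by linarith) hn.le)
    (hf.mono_set (cell_subset_unitInterval hi))
  have hlen : (i:ℝ) / n - ((i:ℝ) - 1) / n = 1 / n := by field_simp; ring
  rw [hlen] at hcs
  calc cellAvg n f i ^ 2 = (n:ℝ) ^ 2 * (∫ x in ((i:ℝ) - 1) / n..(i:ℝ) / n, f x) ^ 2 := by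
        rw [cellAvg, mul_pow]
    _ ≤ (n:ℝ) ^ 2 * (1 / n * ∫ x in ((i:ℝ) - 1) / n..(i:ℝ) / n, f x ^ 2) := by gcongr
    _ = cellAvg n (fun x => f x ^ 2) i := by rw [cellAvg]; field_simp

lemma sum_cellAvg (n : ℕ) {f : ℝ → ℝ} (hf : IntervalIntegrable f volume 0 1) :
    ∑ i ∈ Icc 1 n, cellAvg n f i = n * ∫ x in (0:ℝ)..1, f x := by
  rcases Nat.eq_zero_or_pos n with rfl | hn
  · simp
  have hn' : (0:ℝ) < n := by exact_mod_cast hn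
  have hadj := intervalIntegral.sum_integral_adjacent_intervals (μ := volume) (f := f)
    (a := fun k : ℕ => (k:ℝ) / n) (n := n) fun k hk =>
      hf.mono_set (by simpa using cell_subset_unitInterval (n := n) (i := k + 1) (by
        rw [mem_Icc]; omega))
  simp only [Nat.cast_zero, zero_div, div_self hn'.ne'] at hadj
  rw [← hadj, mul_sum, ← Ico_add_one_right_eq_Icc, sum_Ico_eq_sum_range]
  refine sum_congr rfl fun k _ => ?_
  rw [cellAvg]
  push_cast
  ring_nf

lemma sum_sq_cellAvg_le {n : ℕ} (hn : 0 < n) {f : ℝ → ℝ}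
    (hf : IntervalIntegrable (fun x => f x ^ 2) volume 0 1) :
    1 / n * ∑ i ∈ Icc 1 n, cellAvg n f i ^ 2 ≤ ∫ x in (0:ℝ)..1, f x ^ 2 := by
  calc 1 / n * ∑ i ∈ Icc 1 n, cellAvg n f i ^ 2
      ≤ 1 / n * ∑ i ∈ Icc 1 n, cellAvg n (fun x => f x ^ 2) i := by
        gcongr with i hi
        exact cellAvg_sq_le hi hf
    _ = ∫ x in (0:ℝ)..1, f x ^ 2 := by
        rw [sum_cellAvg n hf]
        field_simp

lemma fvmFlux_mul_le {n i : ℕ} (hi : i ∈ Icc 1 (n - 1)) {b : ℝ → ℝ} {Cb : ℝ}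
    (hb : ∀ x, |b x| ≤ Cb) {p : ℝ → ℝ → ℝ} {t : ℝ}
    (hp : IntervalIntegrable (fun x => p t x ^ 2) volume 0 1) (v : ℕ → ℝ → ℝ) :
    (v i t - v (i + 1) t) * fvmFlux n b p v i t
      ≤ -((n:ℝ) / 2) * (v (i + 1) t - v i t) ^ 2
        + Cb ^ 2 / (2 * n) * cellAvg n (fun x => p t x ^ 2) i := by
  have hi' : 1 ≤ i ∧ i ≤ n - 1 := mem_Icc.1 hi
  have hn : (0:ℝ) < n := by exact_mod_cast (show 0 < n by omega)
  set β := b ((v i t + v (i + 1) t) / 2) * cellAvg n (fun x => p t x) i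
  have hβ : β ^ 2 ≤ Cb ^ 2 * cellAvg n (fun x => p t x ^ 2) i := by
    rw [mul_pow]
    exact mul_le_mul (sq_le_sq' (abs_le.1 (hb _)).1 (abs_le.1 (hb _)).2)
      (cellAvg_sq_le (by rw [mem_Icc]; omega) hp) (sq_nonneg _) (sq_nonneg _)
  calc (v i t - v (i + 1) t) * fvmFlux n b p v i t
      = -(v (i + 1) t - v i t) * (n * (v (i + 1) t - v i t) + β) := by
        rw [fvmFlux, if_pos hi', neg_sub]
    _ ≤ -((n:ℝ) / 2) * (v (i + 1) t - v i t) ^ 2 + β ^ 2 / (2 * n) :=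
        neg_mul_add_le_young hn _ _
    _ ≤ _ := by
        rw [div_mul_eq_mul_div]
        gcongr

noncomputable def energyDensity (g : ℝ → ℝ) (x : ℝ) : ℝ := ∫ s in (0:ℝ)..x, g s * s

noncomputable def fvmEnergy (n : ℕ) (g : ℝ → ℝ) (v : ℕ → ℝ → ℝ) (t : ℝ) : ℝ :=
  1 / n * ∑ i ∈ Icc 1 n, energyDensity g (v i t)

lemma mul_sq_div_two_le_energyDensity {g : ℝ → ℝ} (hg : Continuous g) {c : ℝ}
    (hc : ∀ s, c ≤ g s) (x : ℝ) : c * x ^ 2 / 2 ≤ energyDensity g x := by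
  have hpos : 0 ≤ ∫ s in (0:ℝ)..x, (g s - c) * s := by
    rcases le_total 0 x with hx | hx
    · exact intervalIntegral.integral_nonneg hx fun s hs => mul_nonneg (sub_nonneg.2 (hc s)) hs.1
    · rw [intervalIntegral.integral_symm, ← intervalIntegral.integral_neg]
      exact intervalIntegral.integral_nonneg hx fun s hs => by nlinarith [hc s, hs.2]
  have hsplit : ∫ s in (0:ℝ)..x, (g s - c) * s = energyDensity g x - c * x ^ 2 / 2 := by
    simp_rw [sub_mul]
    rw [intervalIntegral.integral_sub (Continuous.intervalIntegrable (by fun_prop) 0 x)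
      (Continuous.intervalIntegrable (by fun_prop) 0 x), intervalIntegral.integral_const_mul,
      integral_id, energyDensity]
    ring
  linarith

lemma energyDensity_le_mul_sq_div_two {g : ℝ → ℝ} (hg : Continuous g) {C : ℝ}
    (hC : ∀ s, g s ≤ C) (x : ℝ) : energyDensity g x ≤ C * x ^ 2 / 2 := by
  have := mul_sq_div_two_le_energyDensity hg.neg (fun s => neg_le_neg (hC s)) x
  simp only [energyDensity, Pi.neg_apply, neg_mul, intervalIntegral.integral_neg] at this
  rw [energyDensity]
  linarith

lemma hasDerivAt_energyDensity {g : ℝ → ℝ} (hg : Continuous g) (x : ℝ) :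
    HasDerivAt (energyDensity g) (g x * x) x :=
  intervalIntegral.integral_hasDerivAt_right (Continuous.intervalIntegrable (by fun_prop) _ _)
    ((hg.mul continuous_id).stronglyMeasurableAtFilter _ _) (by fun_prop)

lemma mul_sum_sq_le_fvmEnergy {g : ℝ → ℝ} (hg : Continuous g) {c : ℝ} (hc : ∀ s, c ≤ g s)
    (n : ℕ) (v : ℕ → ℝ → ℝ) (t : ℝ) :
    c / 2 * (1 / n * ∑ i ∈ Icc 1 n, v i t ^ 2) ≤ fvmEnergy n g v t := by
  rw [fvmEnergy, mul_left_comm, mul_sum]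
  gcongr with i
  rw [div_mul_eq_mul_div]
  exact mul_sq_div_two_le_energyDensity hg hc _

lemma fvmEnergy_le_mul_sum_sq {g : ℝ → ℝ} (hg : Continuous g) {C : ℝ} (hC : ∀ s, g s ≤ C)
    (n : ℕ) (v : ℕ → ℝ → ℝ) (t : ℝ) :
    fvmEnergy n g v t ≤ C / 2 * (1 / n * ∑ i ∈ Icc 1 n, v i t ^ 2) := by
  rw [fvmEnergy, mul_left_comm, mul_sum (Icc 1 n) _ (C / 2)]
  gcongr with i
  rw [div_mul_eq_mul_div]
  exact energyDensity_le_mul_sq_div_two hg hC _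

lemma sum_sq_le_of_fvmEnergy_add_le {g : ℝ → ℝ} (hg : Continuous g) {c : ℝ} (hc : ∀ s, c ≤ g s)
    (hc0 : 0 < c) {n : ℕ} {v : ℕ → ℝ → ℝ} {t B : ℝ} (ht : 0 ≤ t)
    (hE : fvmEnergy n g v t
        + n / 2 * ∫ s in (0:ℝ)..t, ∑ i ∈ Icc 1 (n - 1), (v (i + 1) s - v i s) ^ 2 ≤ B) :
    1 / (n:ℝ) * ∑ i ∈ Icc 1 n, v i t ^ 2 ≤ 2 / c * B := by
  have hdiss : 0 ≤ ∫ s in (0:ℝ)..t, ∑ i ∈ Icc 1 (n - 1), (v (i + 1) s - v i s) ^ 2 :=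
    intervalIntegral.integral_nonneg ht fun s _ => sum_nonneg fun i _ => sq_nonneg _
  have hX : c / 2 * (1 / n * ∑ i ∈ Icc 1 n, v i t ^ 2) ≤ B := by
    linarith [mul_sum_sq_le_fvmEnergy hg hc n v t,
      mul_nonneg (by positivity : (0:ℝ) ≤ n / 2) hdiss]
  calc 1 / (n:ℝ) * ∑ i ∈ Icc 1 n, v i t ^ 2
      = 2 / c * (c / 2 * (1 / n * ∑ i ∈ Icc 1 n, v i t ^ 2)) := by field_simp
    _ ≤ 2 / c * B := by gcongr

lemma integral_sq_diff_le_of_fvmEnergy_add_le {g : ℝ → ℝ} (hg : Continuous g) {c : ℝ}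
    (hc : ∀ s, c ≤ g s) (hc0 : 0 ≤ c) {n : ℕ} {v : ℕ → ℝ → ℝ} {T B : ℝ}
    (hE : fvmEnergy n g v T
        + n / 2 * ∫ s in (0:ℝ)..T, ∑ i ∈ Icc 1 (n - 1), (v (i + 1) s - v i s) ^ 2 ≤ B) :
    ∫ t in (0:ℝ)..T, 1 / (n:ℝ) * ∑ i ∈ Icc 2 n, ((v i t - v (i - 1) t) / (1 / (n:ℝ))) ^ 2
      ≤ 2 * B := by
  have hET : 0 ≤ fvmEnergy n g v T :=
    (mul_nonneg (by positivity) (mul_nonneg (by positivity)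
      (sum_nonneg fun i _ => sq_nonneg _))).trans (mul_sum_sq_le_fvmEnergy hg hc n v T)
  simp_rw [sum_Icc_two_sq_div_eq]
  rw [intervalIntegral.integral_const_mul]
  linarith

section Scheme

variable {T : ℝ} {n : ℕ} {h' b : ℝ → ℝ} {p : ℝ → ℝ → ℝ} {v₀ : ℝ → ℝ} {v d : ℕ → ℝ → ℝ}

lemma IsFVMSol.continuousOn (hsol : IsFVMSol T n h' b p v₀ v d) {i : ℕ} (hi : i ∈ Icc 1 n) :
    ContinuousOn (v i) (Set.Icc 0 T) :=
  fun t ht => (hsol.2.1 i hi t ht).1.continuousWithinAt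

lemma IsFVMSol.hasDerivWithinAt_fvmEnergy (hsol : IsFVMSol T n h' b p v₀ v d)
    (hh' : Continuous h') {t : ℝ} (ht : t ∈ Set.Icc 0 T) :
    HasDerivWithinAt (fvmEnergy n h' v) (1 / n * ∑ i ∈ Icc 1 n, h' (v i t) * v i t * d i t)
      (Set.Icc 0 T) t := by
  refine HasDerivWithinAt.const_mul _ (HasDerivWithinAt.fun_sum fun i hi => ?_)
  exact (hasDerivAt_energyDensity hh' _).comp_hasDerivWithinAt t (hsol.2.1 i hi t ht).1

lemma IsFVMSol.energy_rate_le (hsol : IsFVMSol T n h' b p v₀ v d) (hn : 0 < n) {Cb : ℝ}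
    (hb : ∀ x, |b x| ≤ Cb) {t : ℝ} (ht : t ∈ Set.Icc 0 T)
    (hp : IntervalIntegrable (fun x => p t x ^ 2) volume 0 1) :
    1 / n * ∑ i ∈ Icc 1 n, h' (v i t) * v i t * d i t
      ≤ -((n:ℝ) / 2) * ∑ i ∈ Icc 1 (n - 1), (v (i + 1) t - v i t) ^ 2
        + Cb ^ 2 / 2 * ∫ x in (0:ℝ)..1, p t x ^ 2 := by
  have hn' : (0:ℝ) < n := by exact_mod_cast hn
  calc 1 / n * ∑ i ∈ Icc 1 n, h' (v i t) * v i t * d i t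
      = ∑ i ∈ Icc 1 n, v i t * (fvmFlux n b p v i t - fvmFlux n b p v (i - 1) t) := by
        rw [mul_sum]
        refine sum_congr rfl fun i hi => ?_
        rw [mul_right_comm, (hsol.2.1 i hi t ht).2]
        field_simp
    _ = ∑ i ∈ Icc 1 (n - 1), (v i t - v (i + 1) t) * fvmFlux n b p v i t :=
        sum_Icc_mul_sub_eq _ _ (by simp [fvmFlux]) (by simp [fvmFlux]; omega)
    _ ≤ ∑ i ∈ Icc 1 (n - 1), (-((n:ℝ) / 2) * (v (i + 1) t - v i t) ^ 2
          + Cb ^ 2 / (2 * n) * cellAvg n (fun x => p t x ^ 2) i) :=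
        sum_le_sum fun i hi => fvmFlux_mul_le hi hb hp v
    _ ≤ -((n:ℝ) / 2) * ∑ i ∈ Icc 1 (n - 1), (v (i + 1) t - v i t) ^ 2
          + Cb ^ 2 / (2 * n) * ∑ i ∈ Icc 1 n, cellAvg n (fun x => p t x ^ 2) i := by
        rw [sum_add_distrib, ← mul_sum, ← mul_sum]
        gcongr
        · exact fun i _ _ => cellAvg_nonneg _ _ fun x => sq_nonneg _
        · exact Nat.sub_le n 1
    _ = _ := by
        rw [sum_cellAvg n hp]
        field_simp

lemma IsFVMSol.fvmEnergy_add_le (hsol : IsFVMSol T n h' b p v₀ v d) (hn : 0 < n)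
    (hh' : Continuous h') {Cb : ℝ} (hb : ∀ x, |b x| ≤ Cb)
    (hp : ∀ t ∈ Set.Icc 0 T, IntervalIntegrable (fun x => p t x ^ 2) volume 0 1)
    (hQ : IntervalIntegrable (fun t => ∫ x in (0:ℝ)..1, p t x ^ 2) volume 0 T)
    {t : ℝ} (ht : t ∈ Set.Icc 0 T) :
    fvmEnergy n h' v t
        + n / 2 * ∫ s in (0:ℝ)..t, ∑ i ∈ Icc 1 (n - 1), (v (i + 1) s - v i s) ^ 2
      ≤ fvmEnergy n h' v 0 + Cb ^ 2 / 2 * ∫ s in (0:ℝ)..T, ∫ x in (0:ℝ)..1, p s x ^ 2 := by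
  have hsub : Set.Icc 0 t ⊆ Set.Icc 0 T := Set.Icc_subset_Icc le_rfl ht.2
  have hrate : IntervalIntegrable (fun s => 1 / n * ∑ i ∈ Icc 1 n, h' (v i s) * v i s * d i s)
      volume 0 t := by
    refine ContinuousOn.intervalIntegrable_of_Icc ht.1 (ContinuousOn.mono ?_ hsub)
    exact continuousOn_const.mul (continuousOn_finsetSum _ fun i hi =>
      ((hh'.comp_continuousOn (hsol.continuousOn hi)).mul (hsol.continuousOn hi)).mul (hsol.1 i hi))
  have hdiss : IntervalIntegrable (fun s => ∑ i ∈ Icc 1 (n - 1), (v (i + 1) s - v i s) ^ 2)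
      volume 0 t := by
    refine ContinuousOn.intervalIntegrable_of_Icc ht.1 (ContinuousOn.mono ?_ hsub)
    refine continuousOn_finsetSum _ fun i hi => ((hsol.continuousOn ?_).sub
      (hsol.continuousOn ?_)).pow 2 <;> simp only [mem_Icc] at hi ⊢ <;> omega
  have hQt : IntervalIntegrable (fun s => ∫ x in (0:ℝ)..1, p s x ^ 2) volume 0 t :=
    hQ.mono_set (Set.uIcc_subset_uIcc Set.left_mem_uIcc (Set.mem_uIcc_of_le ht.1 ht.2))
  have hftc := intervalIntegral.integral_eq_sub_of_hasDerivAt_of_le ht.1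
    (fun s hs => (hsol.hasDerivWithinAt_fvmEnergy hh' (hsub hs)).continuousWithinAt.mono hsub)
    (fun s hs => (hsol.hasDerivWithinAt_fvmEnergy hh' ⟨hs.1.le, hs.2.le.trans ht.2⟩).hasDerivAt
      (Icc_mem_nhds hs.1 (hs.2.trans_le ht.2))) hrate
  have hrate_le := intervalIntegral.integral_mono_on ht.1 hrate
    ((hdiss.const_mul _).add (hQt.const_mul _))
    fun s hs => hsol.energy_rate_le hn hb (hsub hs) (hp s (hsub hs))
  rw [hftc, intervalIntegral.integral_add (hdiss.const_mul _) (hQt.const_mul _),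
    intervalIntegral.integral_const_mul, intervalIntegral.integral_const_mul] at hrate_le
  have hQ_le := intervalIntegral.integral_mono_interval le_rfl ht.1 ht.2
    (ae_of_all _ fun s => intervalIntegral.integral_nonneg zero_le_one fun x _ => sq_nonneg _) hQ
  linarith [mul_le_mul_of_nonneg_left hQ_le (by positivity : (0:ℝ) ≤ Cb ^ 2 / 2)]

lemma IsFVMSol.fvmEnergy_zero_le (hsol : IsFVMSol T n h' b p v₀ v d) (hn : 0 < n)
    (hh' : Continuous h') {C : ℝ} (hC : ∀ s, h' s ≤ C) (hC0 : 0 ≤ C)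
    (hv₀ : IntervalIntegrable (fun x => v₀ x ^ 2) volume 0 1) :
    fvmEnergy n h' v 0 ≤ C / 2 * ∫ x in (0:ℝ)..1, v₀ x ^ 2 := by
  refine (fvmEnergy_le_mul_sum_sq hh' hC n v 0).trans ?_
  rw [sum_congr rfl fun i hi => by rw [hsol.2.2 i hi]]
  gcongr
  exact sum_sq_cellAvg_le hn hv₀

end Scheme

theorem stmt_3_general
    (T : ℝ) (hT : 0 < T)
    (h' h'' b b' b'' : ℝ → ℝ) (Ch1 Ch2 Cb1 Cb2 : ℝ)
    (hCh1 : 0 < Ch1) (hCh2 : 0 < Ch2) (hCb1 : 0 < Cb1)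
    (hh'deriv : ∀ x : ℝ, HasDerivAt h' (h'' x) x)
    (hA1 : ∀ x : ℝ, Ch1 ≤ h' x ∧ h' x ≤ Ch2 ∧ |h'' x| ≤ Ch2)
    (hA2 : ∀ x : ℝ, Cb1 ≤ b x ∧ b x ≤ Cb2 ∧ |b' x| ≤ Cb2 ∧ |b'' x| ≤ Cb2)
    (p : ℝ → ℝ → ℝ)
    (hp2 : ∀ t ∈ Set.Icc (0:ℝ) T, IntervalIntegrable (fun x => (p t x)^2) volume 0 1)
    (hp4 : IntervalIntegrable (fun t => (∫ x in (0:ℝ)..1, (p t x)^2)^2) volume 0 T)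
    (v₀ : ℝ → ℝ)
    (hv₀2 : IntervalIntegrable (fun x => (v₀ x)^2) volume 0 1) :
    ∃ C₁ : ℝ, 0 < C₁ ∧ ∀ n : ℕ, 3 ≤ n → ∀ v d : ℕ → ℝ → ℝ,
      IsFVMSol T n h' b p v₀ v d →
      (∀ t ∈ Set.Icc (0:ℝ) T,
          (1 / (n:ℝ)) * ∑ i ∈ Finset.Icc 1 n, (v i t)^2 ≤ C₁) ∧
      (∫ t in (0:ℝ)..T, (1 / (n:ℝ)) * ∑ i ∈ Finset.Icc 2 n,
            ((v i t - v (i - 1) t) / (1 / (n:ℝ)))^2) ≤ C₁ := by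
  have hh' : Continuous h' := continuous_iff_continuousAt.2 fun x => (hh'deriv x).continuousAt
  have hb : ∀ x, |b x| ≤ Cb2 := fun x =>
    abs_le.2 ⟨by linarith [(hA2 x).1, (hA2 x).2.1], (hA2 x).2.1⟩
  have hQ : IntervalIntegrable (fun t => ∫ x in (0:ℝ)..1, p t x ^ 2) volume 0 T :=
    hp4.of_sq_of_nonneg fun t => intervalIntegral.integral_nonneg zero_le_one fun x _ => sq_nonneg _
  set B := Ch2 / 2 * (∫ x in (0:ℝ)..1, v₀ x ^ 2)
    + Cb2 ^ 2 / 2 * ∫ t in (0:ℝ)..T, ∫ x in (0:ℝ)..1, p t x ^ 2 with hB_def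
  have hB : 0 ≤ B := by
    have : 0 ≤ ∫ x in (0:ℝ)..1, v₀ x ^ 2 :=
      intervalIntegral.integral_nonneg zero_le_one fun x _ => sq_nonneg _
    have : 0 ≤ ∫ t in (0:ℝ)..T, ∫ x in (0:ℝ)..1, p t x ^ 2 := intervalIntegral.integral_nonneg
      hT.le fun t _ => intervalIntegral.integral_nonneg zero_le_one fun x _ => sq_nonneg _
    positivity
  refine ⟨(2 / Ch1 + 2) * B + 1, add_pos_of_nonneg_of_pos (mul_nonneg (by positivity) hB) one_pos,
    fun n hn v d hsol => ?_⟩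
  have hn0 : 0 < n := by omega
  have hE t (ht : t ∈ Set.Icc 0 T) :
      fvmEnergy n h' v t
        + n / 2 * ∫ s in (0:ℝ)..t, ∑ i ∈ Icc 1 (n - 1), (v (i + 1) s - v i s) ^ 2 ≤ B := by
    linarith [hsol.fvmEnergy_add_le hn0 hh' hb hp2 hQ ht,
      hsol.fvmEnergy_zero_le hn0 hh' (fun s => (hA1 s).2.1) hCh2.le hv₀2]
  have hB' : 0 ≤ 2 / Ch1 * B := by positivity
  refine ⟨fun t ht => ?_, ?_⟩
  · linarith [sum_sq_le_of_fvmEnergy_add_le hh' (fun s => (hA1 s).1) hCh1 ht.1 (hE t ht)]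
  · linarith [integral_sq_diff_le_of_fvmEnergy_add_le hh' (fun s => (hA1 s).1) hCh1.le
      (hE T ⟨hT.le, le_rfl⟩)]

/-- **Uniform a priori bounds for the finite volume approximations (Lemma 3.1).**
Under (A1), (A2), `p ∈ L⁴(0,T;L²(0,1))` and `v₀ ∈ L²(0,1)`, there is `C₁ > 0`
independent of `n ≥ 3` such that the approximate solution satisfies
`sup_{t∈[0,T]} ‖v^{(n)}(t)‖²_{L²(0,1)} ≤ C₁` and `∫₀ᵀ ‖ṽ^{(n)}(t)‖²_{L²(0,1)} dt ≤ C₁`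
(the squared norms being `Δx ∑_{i=1}^n v_i(t)²` and `Δx ∑_{i=2}^n ((v_i − v_{i−1})/Δx)²`). -/
theorem stmt_3
    (T : ℝ) (hT : 0 < T)
    (h h' h'' b b' b'' : ℝ → ℝ) (Ch1 Ch2 Cb1 Cb2 : ℝ)
    (hCh1 : 0 < Ch1) (hCh2 : 0 < Ch2) (hCb1 : 0 < Cb1) (hCb2 : 0 < Cb2)
    (hhderiv : ∀ x : ℝ, HasDerivAt h (h' x) x)
    (hh'deriv : ∀ x : ℝ, HasDerivAt h' (h'' x) x)
    (hh''cont : Continuous h'')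
    (hA1 : ∀ x : ℝ, Ch1 ≤ h' x ∧ h' x ≤ Ch2 ∧ |h'' x| ≤ Ch2)
    (hbderiv : ∀ x : ℝ, HasDerivAt b (b' x) x)
    (hb'deriv : ∀ x : ℝ, HasDerivAt b' (b'' x) x)
    (hb''cont : Continuous b'')
    (hA2 : ∀ x : ℝ, Cb1 ≤ b x ∧ b x ≤ Cb2 ∧ |b' x| ≤ Cb2 ∧ |b'' x| ≤ Cb2)
    (p : ℝ → ℝ → ℝ)
    (hp1 : ∀ t ∈ Set.Icc (0:ℝ) T, IntervalIntegrable (fun x => p t x) volume 0 1)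
    (hp2 : ∀ t ∈ Set.Icc (0:ℝ) T, IntervalIntegrable (fun x => (p t x)^2) volume 0 1)
    (hp4 : IntervalIntegrable (fun t => (∫ x in (0:ℝ)..1, (p t x)^2)^2) volume 0 T)
    (v₀ : ℝ → ℝ)
    (hv₀1 : IntervalIntegrable v₀ volume 0 1)
    (hv₀2 : IntervalIntegrable (fun x => (v₀ x)^2) volume 0 1) :
    ∃ C₁ : ℝ, 0 < C₁ ∧ ∀ n : ℕ, 3 ≤ n → ∀ v d : ℕ → ℝ → ℝ,
      IsFVMSol T n h' b p v₀ v d →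
      (∀ t ∈ Set.Icc (0:ℝ) T,
          (1 / (n:ℝ)) * ∑ i ∈ Finset.Icc 1 n, (v i t)^2 ≤ C₁) ∧
      (∫ t in (0:ℝ)..T, (1 / (n:ℝ)) * ∑ i ∈ Finset.Icc 2 n,
            ((v i t - v (i - 1) t) / (1 / (n:ℝ)))^2) ≤ C₁ :=
  stmt_3_general T hT h' h'' b b' b'' Ch1 Ch2 Cb1 Cb2 hCh1 hCh2 hCb1 hh'deriv hA1 hA2 p hp2 hp4 v₀
    hv₀2
end

section
/- Uniform L^∞ bound on the approximate solutions (Lemma 4.2). Assume (A1) and (A2), let T > 0, p ∈ W^{1,2}(0,T; L²(0,1)) ∩ L^∞((0,T)×(0,1)) ∩ L²(0,T; H¹(0,1)), and v₀ ∈ H¹(0,1). Then there exists a constant C₆ > 0, depending only on h, b, p, v₀, T and independent of n, such that for every integer n ≥ 3 the approximate solution v^{(n)} of the finite volume scheme satisfies ess sup_{(t,x)∈(0,T)×(0,1)} |v^{(n)}(t,x)| ≤ C₆. In fact, for every t ∈ [0,T] and every i = 1,…,n, |v_i(t)| ≤ ‖ṽ^{(n)}(t,·)‖_{L²(0,1)}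 + ‖v^{(n)}(t,·)‖_{L²(0,1)}. -/
/-!
A discrete De Giorgi argument, which only uses that the drift `b(v) p` and the initial data are
bounded, so that no constant depends on `n`. Testing the scheme with the truncations `(v_i - k)⁺`
at levels `k` above the initial data, the diffusive flux dissipates `‖(v - k)⁺~‖²` while the
drift only costs on the edges where `v > k`. Counting those edges by Chebyshev's inequality at a
lower level and bounding `max_i (v_i - k)⁺` by the discrete Agmon inequality
`w_i² ≤ 2‖w~‖² + 2‖w‖²`, the quantities `Y_m = ∫₀ᵀ ‖(v - ℓ_m)⁺‖²` along the levels
`ℓ_m = 2K - K/2^m` satisfy `Y_{m+1} ≤ C 64^m Y_m²`. For `K` large this forces `Y_m → 0`, so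
`(v - 2K)⁺` vanishes in `L²`, and one more energy estimate gives `v ≤ 3K`; the same applied to `-v`
bounds `|v|`. The second estimate is the discrete Sobolev inequality: telescope from a cell where
`|v_j|` is smallest and apply Cauchy–Schwarz.
-/

open MeasureTheory

lemma sum_Icc_two_eq_sum_Icc_succ (f : ℕ → ℝ) (n : ℕ) :
    ∑ k ∈ Finset.Icc 2 n, f k = ∑ i ∈ Finset.Icc 1 (n - 1), f (i + 1) := by
  refine Finset.sum_nbij' (· - 1) (· + 1) ?_ ?_ ?_ ?_ ?_ <;> intro a ha <;>
    simp only [Finset.mem_Icc] at ha ⊢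
  all_goals first | omega | (congr 1; omega)

lemma sum_Icc_sub_mul_eq (F w : ℕ → ℝ) {N : ℕ} (hN : 1 ≤ N) :
    ∑ i ∈ Finset.Icc 1 N, (F i - F (i - 1)) * w i
      = F N * w N - F 0 * w 1 + ∑ i ∈ Finset.Icc 1 (N - 1), F i * (w i - w (i + 1)) := by
  induction N, hN using Nat.le_induction with
  | base => simp only [Finset.Icc_self, Finset.sum_singleton, Nat.sub_self,
      Finset.Icc_eq_empty_of_lt one_pos, Finset.sum_empty]; ring
  | succ m hm ih =>
    obtain ⟨m, rfl⟩ : ∃ m', m = m' + 1 := ⟨m - 1, by omega⟩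
    rw [Finset.sum_Icc_succ_top (by omega), ih]
    simp only [Nat.add_sub_cancel]
    rw [Finset.sum_Icc_succ_top (by omega : 1 ≤ m + 1)]
    ring

lemma le_div_pow_of_le_mul_pow_mul_sq {Y : ℕ → ℝ} {C B : ℝ} (hB : 0 < B) (hC : 0 ≤ C)
    (hY : ∀ m, 0 ≤ Y m) (hrec : ∀ m, Y (m + 1) ≤ C * B ^ m * Y m ^ 2)
    (hsmall : C * B * Y 0 ≤ 1) (m : ℕ) : Y m ≤ Y 0 / B ^ m := by
  induction m with
  | zero => simp
  | succ m ih =>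
    have hY0 := hY 0
    calc Y (m + 1) ≤ C * B ^ m * (Y 0 / B ^ m) ^ 2 := (hrec m).trans (by gcongr; exact hY m)
      _ = C * B * Y 0 * (Y 0 / B ^ (m + 1)) := by field_simp; ring
      _ ≤ Y 0 / B ^ (m + 1) := mul_le_of_le_one_left (by positivity) hsmall

section DiscreteNorms

/-- `Δx ∑ u_i²` and `Δx ∑ ((u_{i+1} - u_i)/Δx)²` are `sumSq n u / n` and `n * sumSqDiff n u`. -/
def sumSq (n : ℕ) (u : ℕ → ℝ) : ℝ := ∑ i ∈ Finset.Icc 1 n, u i ^ 2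

def sumSqDiff (n : ℕ) (u : ℕ → ℝ) : ℝ := ∑ i ∈ Finset.Icc 1 (n - 1), (u (i + 1) - u i) ^ 2

variable {n : ℕ} {u : ℕ → ℝ}

lemma sumSq_nonneg : 0 ≤ sumSq n u := Finset.sum_nonneg fun _ _ => sq_nonneg _

lemma sumSqDiff_nonneg : 0 ≤ sumSqDiff n u := Finset.sum_nonneg fun _ _ => sq_nonneg _

lemma sq_le_sumSq {i : ℕ} (hi : i ∈ Finset.Icc 1 n) : u i ^ 2 ≤ sumSq n u :=
  Finset.single_le_sum (fun j _ => sq_nonneg (u j)) hi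

lemma sum_sq_succ_le_sumSq : ∑ i ∈ Finset.Icc 1 (n - 1), u (i + 1) ^ 2 ≤ sumSq n u := by
  rw [← sum_Icc_two_eq_sum_Icc_succ (u · ^ 2)]
  exact Finset.sum_le_sum_of_subset_of_nonneg (Finset.Icc_subset_Icc (by norm_num) le_rfl)
    fun _ _ _ => sq_nonneg _

lemma inv_mul_sum_Icc_two_sq_div_eq (n : ℕ) (u : ℕ → ℝ) :
    1 / (n : ℝ) * ∑ k ∈ Finset.Icc 2 n, ((u k - u (k - 1)) / (1 / (n : ℝ))) ^ 2
      = n * sumSqDiff n u := by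
  rw [sum_Icc_two_eq_sum_Icc_succ, sumSqDiff, Finset.mul_sum, Finset.mul_sum]
  refine Finset.sum_congr rfl fun i _ => ?_
  rw [Nat.add_sub_cancel]
  rcases eq_or_ne (n : ℝ) 0 with h | h
  · simp [h]
  · field_simp

lemma abs_sub_le_sum_abs_sub {i j : ℕ} (hi : i ∈ Finset.Icc 1 n) (hj : j ∈ Finset.Icc 1 n) :
    |u i - u j| ≤ ∑ l ∈ Finset.Icc 1 (n - 1), |u (l + 1) - u l| := by
  wlog hji : j ≤ i generalizing i j
  · rw [abs_sub_comm]; exact this hj hi (by omega)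
  rw [← Finset.sum_Ico_sub u hji]
  refine (Finset.abs_sum_le_sum_abs _ _).trans
    (Finset.sum_le_sum_of_subset_of_nonneg ?_ fun _ _ _ => abs_nonneg _)
  intro l hl
  simp only [Finset.mem_Ico, Finset.mem_Icc] at hl hi hj ⊢
  omega

lemma abs_le_sqrt_mul_sumSqDiff_add_sqrt {i : ℕ} (hi : i ∈ Finset.Icc 1 n) :
    |u i| ≤ √(n * sumSqDiff n u) + √(sumSq n u / n) := by
  obtain ⟨j, hj, hj_min⟩ := Finset.exists_min_image (Finset.Icc 1 n) (fun j => u j ^ 2) ⟨i, hi⟩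
  have hn : (0 : ℝ) < n := by simp only [Finset.mem_Icc] at hi; exact_mod_cast (by omega : 0 < n)
  have h_min : |u j| ≤ √(sumSq n u / n) := by
    rw [← Real.sqrt_sq_eq_abs]
    refine Real.sqrt_le_sqrt ?_
    rw [le_div_iff₀ hn]
    have := Finset.card_nsmul_le_sum (Finset.Icc 1 n) (fun j => u j ^ 2) _ hj_min
    rw [Nat.card_Icc, Nat.add_sub_cancel, nsmul_eq_mul] at this
    rw [sumSq]; linarith
  have h_cs : (∑ l ∈ Finset.Icc 1 (n - 1), |u (l + 1) - u l|) ^ 2 ≤ n * sumSqDiff n u := by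
    refine (sq_sum_le_card_mul_sum_sq).trans ?_
    simp only [sq_abs, Nat.card_Icc, Nat.add_sub_cancel]
    exact mul_le_mul_of_nonneg_right (by exact_mod_cast Nat.sub_le n 1) sumSqDiff_nonneg
  have h_osc : |u i - u j| ≤ √(n * sumSqDiff n u) :=
    (abs_sub_le_sum_abs_sub hi hj).trans (Real.le_sqrt_of_sq_le h_cs)
  calc |u i| ≤ |u i - u j| + |u j| := by simpa using abs_add_le (u i - u j) (u j)
    _ ≤ _ := add_le_add h_osc h_min

lemma sq_le_two_mul_sumSqDiff_add {i : ℕ} (hi : i ∈ Finset.Icc 1 n) :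
    u i ^ 2 ≤ 2 * (n * sumSqDiff n u) + 2 * (sumSq n u / n) := by
  have hA : 0 ≤ n * sumSqDiff n u := mul_nonneg (Nat.cast_nonneg n) sumSqDiff_nonneg
  have hB : 0 ≤ sumSq n u / n := div_nonneg sumSq_nonneg (Nat.cast_nonneg n)
  calc u i ^ 2 = |u i| ^ 2 := (sq_abs _).symm
    _ ≤ (√(n * sumSqDiff n u) + √(sumSq n u / n)) ^ 2 :=
      pow_le_pow_left₀ (abs_nonneg _) (abs_le_sqrt_mul_sumSqDiff_add_sqrt hi) 2
    _ ≤ _ := by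
      nlinarith [Real.sq_sqrt hA, Real.sq_sqrt hB,
        sq_nonneg (√(n * sumSqDiff n u) - √(sumSq n u / n))]

end DiscreteNorms

lemma sq_sub_max_le_mul_sub_max (x y k : ℝ) :
    (max (y - k) 0 - max (x - k) 0) ^ 2 ≤ (y - x) * (max (y - k) 0 - max (x - k) 0) := by
  rcases le_total (x - k) 0 with hx | hx <;> rcases le_total (y - k) 0 with hy | hy <;>
    simp only [max_eq_left, max_eq_right, hx, hy] <;> nlinarith

/-- One edge of the energy estimate. The perturbation of the flux is absorbed by Young's
inequality, which costs nothing on edges where the truncation at `k` vanishes. -/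
lemma flux_mul_sub_max_le {N γ F x y k χ : ℝ} (hN : 0 < N) (hF : |F - N * (y - x)| ≤ γ)
    (hχ : 0 ≤ χ) (hact : k < x ∨ k < y → 1 ≤ χ) :
    F * (max (x - k) 0 - max (y - k) 0)
      ≤ -(N / 2) * (max (y - k) 0 - max (x - k) 0) ^ 2 + γ ^ 2 / (2 * N) * χ := by
  set Δ := max (y - k) 0 - max (x - k) 0
  have h_diss : Δ ^ 2 ≤ (y - x) * Δ := sq_sub_max_le_mul_sub_max x y k
  have h_pert : (F - N * (y - x)) * -Δ ≤ γ * |Δ| := by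
    calc (F - N * (y - x)) * -Δ ≤ |F - N * (y - x)| * |Δ| := by
          rw [← abs_neg Δ, ← abs_mul]; exact le_abs_self _
      _ ≤ γ * |Δ| := mul_le_mul_of_nonneg_right hF (abs_nonneg _)
  have h_young : γ * |Δ| ≤ N / 2 * Δ ^ 2 + γ ^ 2 / (2 * N) * χ := by
    by_cases hΔ : Δ = 0
    · rw [hΔ, abs_zero, mul_zero]; positivity
    have hχ1 : 1 ≤ χ := hact <| by
      by_contra! h
      exact hΔ (by simp only [Δ, max_eq_right (sub_nonpos.2 h.1), max_eq_right (sub_nonpos.2 h.2),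
        sub_self])
    have : N / 2 * Δ ^ 2 + γ ^ 2 / (2 * N) - γ * |Δ| = (N * |Δ| - γ) ^ 2 / (2 * N) := by
      rw [← sq_abs Δ]; field_simp; ring
    have h_sq : 0 ≤ (N * |Δ| - γ) ^ 2 / (2 * N) := by positivity
    have h_χ : γ ^ 2 / (2 * N) ≤ γ ^ 2 / (2 * N) * χ :=
      le_mul_of_one_le_right (by positivity) hχ1
    linarith
  have : F * -Δ = (F - N * (y - x)) * -Δ - N * ((y - x) * Δ) := by ring
  calc F * (max (x - k) 0 - max (y - k) 0) = F * -Δ := by simp only [Δ]; ring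
    _ ≤ _ := by nlinarith

lemma one_le_div_sq_of_lt {x y k δ : ℝ} (hδ : 0 < δ) (h : k + δ < x ∨ k + δ < y) :
    1 ≤ (max (x - k) 0 ^ 2 + max (y - k) 0 ^ 2) / δ ^ 2 := by
  rw [one_le_div (by positivity)]
  rcases h with h | h
  · nlinarith [le_max_left (x - k) 0, sq_nonneg (max (y - k) 0)]
  · nlinarith [le_max_left (y - k) 0, sq_nonneg (max (x - k) 0)]

lemma max_sub_add_sq_le {δ : ℝ} (hδ : 0 < δ) (x k : ℝ) :
    max (x - (k + δ)) 0 ^ 2 ≤ max (x - k) 0 ^ 4 / δ ^ 2 := by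
  rw [le_div_iff₀ (by positivity)]
  rcases le_total x (k + δ) with hx | hx
  · rw [max_eq_right (by linarith)]; norm_num
  · rw [max_eq_left (by linarith), max_eq_left (by linarith)]
    have h : (x - (k + δ)) * δ ≤ (x - k) ^ 2 := by nlinarith
    have h0 : 0 ≤ (x - (k + δ)) * δ := mul_nonneg (by linarith) hδ.le
    nlinarith [mul_le_mul h h h0 (sq_nonneg _)]

section TruncPrimitive

/-- The energy density of the level-`k` truncation. -/
noncomputable def truncPrimitive (a : ℝ → ℝ) (k s : ℝ) : ℝ := ∫ u in k..s, a u * max (u - k) 0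

variable {a : ℝ → ℝ} {k : ℝ}

lemma hasDerivAt_truncPrimitive (ha : Continuous a) (s : ℝ) :
    HasDerivAt (truncPrimitive a k) (a s * max (s - k) 0) s :=
  ((by fun_prop : Continuous fun u => a u * max (u - k) 0).integral_hasStrictDerivAt k s).hasDerivAt

lemma truncPrimitive_of_le {s : ℝ} (hs : s ≤ k) : truncPrimitive a k s = 0 := by
  rw [truncPrimitive, intervalIntegral.integral_congr (g := fun _ => 0) fun u hu => ?_,
    intervalIntegral.integral_zero]
  rw [Set.uIcc_of_ge hs] at hu
  simp [max_eq_right (sub_nonpos.2 hu.2)]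

lemma mul_sq_le_truncPrimitive {c : ℝ} (ha : Continuous a) (hca : ∀ x, c ≤ a x) (s : ℝ) :
    c / 2 * max (s - k) 0 ^ 2 ≤ truncPrimitive a k s := by
  rcases le_total s k with hs | hs
  · rw [truncPrimitive_of_le hs, max_eq_right (by linarith)]; simp
  have h_int : ∫ u in k..s, c * (u - k) = c / 2 * (s - k) ^ 2 := by
    rw [intervalIntegral.integral_const_mul, intervalIntegral.integral_comp_sub_right
      (fun u => u), integral_id]
    ring
  rw [max_eq_left (by linarith), ← h_int]
  refine intervalIntegral.integral_mono_on hs ((by fun_prop : Continuous _).intervalIntegrable _ _)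
    ((by fun_prop : Continuous _).intervalIntegrable _ _) fun u hu => ?_
  rw [max_eq_left (by linarith [hu.1])]
  exact mul_le_mul_of_nonneg_right (hca u) (by linarith [hu.1])

end TruncPrimitive

section Excess

def excess (k : ℝ) (u : ℕ → ℝ) (i : ℕ) : ℝ := max (u i - k) 0

variable {n : ℕ} {u : ℕ → ℝ} {k : ℝ}

lemma sumSq_excess_anti {k' : ℝ} (h : k ≤ k') : sumSq n (excess k' u) ≤ sumSq n (excess k u) :=
  Finset.sum_le_sum fun _ _ =>
    pow_le_pow_left₀ (le_max_right _ _) (max_le_max (by linarith) le_rfl) 2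

/-- Chebyshev's inequality combined with the discrete Agmon inequality. -/
lemma sumSq_excess_add_le {δ : ℝ} (hδ : 0 < δ) :
    sumSq n (excess (k + δ) u)
      ≤ (2 * (n * sumSqDiff n (excess k u)) + 2 * (sumSq n (excess k u) / n))
          * sumSq n (excess k u) / δ ^ 2 := by
  set A := 2 * (n * sumSqDiff n (excess k u)) + 2 * (sumSq n (excess k u) / n)
  calc sumSq n (excess (k + δ) u) ≤ ∑ i ∈ Finset.Icc 1 n, A * excess k u i ^ 2 / δ ^ 2 := by
        refine Finset.sum_le_sum fun i hi => (max_sub_add_sq_le hδ _ _).trans ?_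
        rw [show max (u i - k) 0 ^ 4 = excess k u i ^ 2 * excess k u i ^ 2 by rw [excess]; ring]
        gcongr
        exact sq_le_two_mul_sumSqDiff_add hi
    _ = A * sumSq n (excess k u) / δ ^ 2 := by rw [← Finset.sum_div, ← Finset.mul_sum, sumSq]

lemma mul_sum_flux_sub_mul_excess_le {γ : ℝ} (hn : 0 < n) (F χ : ℕ → ℝ) (hF0 : F 0 = 0)
    (hFn : F n = 0) (hF : ∀ i ∈ Finset.Icc 1 (n - 1), |F i - n * (u (i + 1) - u i)| ≤ γ)
    (hχ : ∀ i ∈ Finset.Icc 1 (n - 1), 0 ≤ χ i)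
    (hact : ∀ i ∈ Finset.Icc 1 (n - 1), k < u i ∨ k < u (i + 1) → 1 ≤ χ i) :
    n * ∑ i ∈ Finset.Icc 1 n, (F i - F (i - 1)) * excess k u i
      ≤ -((n : ℝ) ^ 2 / 2) * sumSqDiff n (excess k u)
          + γ ^ 2 / 2 * ∑ i ∈ Finset.Icc 1 (n - 1), χ i := by
  have hn' : (0 : ℝ) < n := Nat.cast_pos.2 hn
  rw [sum_Icc_sub_mul_eq F _ hn, hF0, hFn, zero_mul, zero_mul, sub_zero, zero_add,
    sumSqDiff, Finset.mul_sum, Finset.mul_sum, Finset.mul_sum, ← Finset.sum_add_distrib]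
  refine Finset.sum_le_sum fun i hi => ?_
  calc (n : ℝ) * (F i * (excess k u i - excess k u (i + 1)))
      ≤ n * (-(n / 2) * (excess k u (i + 1) - excess k u i) ^ 2 + γ ^ 2 / (2 * n) * χ i) :=
        mul_le_mul_of_nonneg_left (flux_mul_sub_max_le hn' (hF i hi) (hχ i hi) (hact i hi)) hn'.le
    _ = _ := by field_simp

end Excess

/-- The scheme (OP) with the drift part `b(·) p_i` of the flux only known to be bounded by `γ`. -/
structure IsBoundedDriftScheme (n : ℕ) (T : ℝ) (a : ℝ → ℝ) (γ : ℝ) (v d F : ℕ → ℝ → ℝ) :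
    Prop where
  hasDerivWithinAt : ∀ i ∈ Finset.Icc 1 n, ∀ t ∈ Set.Icc 0 T,
    HasDerivWithinAt (v i) (d i t) (Set.Icc 0 T) t
  balance : ∀ i ∈ Finset.Icc 1 n, ∀ t ∈ Set.Icc 0 T,
    a (v i t) * d i t = n * (F i t - F (i - 1) t)
  flux_zero : ∀ t, F 0 t = 0
  flux_last : ∀ t, F n t = 0
  abs_flux_sub_le : ∀ i ∈ Finset.Icc 1 (n - 1), ∀ t ∈ Set.Icc 0 T,
    |F i t - n * (v (i + 1) t - v i t)| ≤ γ

noncomputable def excessIntegral (n : ℕ) (T : ℝ) (v : ℕ → ℝ → ℝ) (k : ℝ) : ℝ :=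
  ∫ s in 0..T, sumSq n (excess k (v · s))

/-- Large enough for the smallness condition of the iteration started at level `K`. -/
noncomputable def deGiorgiLevel (c γ K₀ T : ℝ) : ℝ :=
  max 1 (max K₀ (2 ^ 20 * γ ^ 4 * (2 * γ ^ 2 + 1) * T ^ 2 / c ^ 2))

lemma deGiorgi_coeff_le {c γ K : ℝ} (hc : 0 < c) (hK : 1 ≤ K) (m : ℕ) :
    4 * γ ^ 2 * (2 * γ ^ 2 / (K / 2 ^ (m + 2)) ^ 2 + 1) / (c * (K / 2 ^ (m + 2)) ^ 4)
      ≤ 16384 * γ ^ 2 * (2 * γ ^ 2 + 1) / (c * K ^ 4) * 64 ^ m := by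
  set q : ℝ := 2 ^ (m + 2)
  have hq : 1 ≤ q ^ 2 := one_le_pow₀ (one_le_pow₀ (by norm_num))
  have hq6 : q ^ 6 = 4096 * 64 ^ m := by
    simp only [q]; rw [← pow_mul, show (m + 2) * 6 = 6 * m + 12 by ring, pow_add, pow_mul]
    norm_num; ring
  have hK0 : 0 < K := by linarith
  have h_inner : 2 * γ ^ 2 * q ^ 2 / K ^ 2 + 1 ≤ (2 * γ ^ 2 + 1) * q ^ 2 := by
    have : 2 * γ ^ 2 * q ^ 2 / K ^ 2 ≤ 2 * γ ^ 2 * q ^ 2 :=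
      div_le_self (by positivity) (one_le_pow₀ hK)
    nlinarith
  calc 4 * γ ^ 2 * (2 * γ ^ 2 / (K / q) ^ 2 + 1) / (c * (K / q) ^ 4)
      = 4 * γ ^ 2 * (2 * γ ^ 2 * q ^ 2 / K ^ 2 + 1) * q ^ 4 / (c * K ^ 4) := by
        field_simp
    _ ≤ 4 * γ ^ 2 * ((2 * γ ^ 2 + 1) * q ^ 2) * q ^ 4 / (c * K ^ 4) := by gcongr
    _ = 4 * γ ^ 2 * (2 * γ ^ 2 + 1) * q ^ 6 / (c * K ^ 4) := by ring
    _ = _ := by rw [hq6]; ring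

namespace IsBoundedDriftScheme

variable {n : ℕ} {T γ c k K₀ : ℝ} {a : ℝ → ℝ} {v d F : ℕ → ℝ → ℝ}

lemma neg (hS : IsBoundedDriftScheme n T a γ v d F) :
    IsBoundedDriftScheme n T (fun x => a (-x)) γ (fun i t => -v i t) (fun i t => -d i t)
      (fun i t => -F i t) where
  hasDerivWithinAt i hi t ht := (hS.hasDerivWithinAt i hi t ht).neg
  balance i hi t ht := by rw [neg_neg, mul_neg, hS.balance i hi t ht]; ring
  flux_zero t := by rw [hS.flux_zero, neg_zero]
  flux_last t := by rw [hS.flux_last, neg_zero]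
  abs_flux_sub_le i hi t ht := by
    rw [← abs_neg]; convert hS.abs_flux_sub_le i hi t ht using 2; ring

lemma continuousOn (hS : IsBoundedDriftScheme n T a γ v d F) {i : ℕ} (hi : i ∈ Finset.Icc 1 n) :
    ContinuousOn (v i) (Set.Icc 0 T) :=
  fun t ht => (hS.hasDerivWithinAt i hi t ht).continuousWithinAt

lemma continuousOn_sumSq_excess (hS : IsBoundedDriftScheme n T a γ v d F) (k : ℝ) :
    ContinuousOn (fun t => sumSq n (excess k (v · t))) (Set.Icc 0 T) :=
  continuousOn_finsetSum _ fun i hi => by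
    have := hS.continuousOn hi
    simp only [excess]; fun_prop

lemma continuousOn_sumSqDiff_excess (hS : IsBoundedDriftScheme n T a γ v d F) (k : ℝ) :
    ContinuousOn (fun t => sumSqDiff n (excess k (v · t))) (Set.Icc 0 T) := by
  refine continuousOn_finsetSum _ fun i hi => ?_
  have hi' : i ∈ Finset.Icc 1 n := by simp only [Finset.mem_Icc] at hi ⊢; omega
  have hi1 : i + 1 ∈ Finset.Icc 1 n := by simp only [Finset.mem_Icc] at hi ⊢; omega
  have := hS.continuousOn hi'
  have := hS.continuousOn hi1
  simp only [excess]; fun_prop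

lemma hasDerivAt_sum_truncPrimitive (hS : IsBoundedDriftScheme n T a γ v d F)
    (ha : Continuous a) {s : ℝ} (hs : s ∈ Set.Ioo 0 T) :
    HasDerivAt (fun s => ∑ i ∈ Finset.Icc 1 n, truncPrimitive a k (v i s))
      (n * ∑ i ∈ Finset.Icc 1 n, (F i s - F (i - 1) s) * excess k (v · s) i) s := by
  rw [Finset.mul_sum]
  refine HasDerivAt.fun_sum fun i hi => ?_
  refine ((hasDerivAt_truncPrimitive ha (v i s)).comp s
    ((hS.hasDerivWithinAt i hi s (Set.Ioo_subset_Icc_self hs)).hasDerivAt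
      (Icc_mem_nhds hs.1 hs.2))).congr_deriv ?_
  rw [mul_right_comm, hS.balance i hi s (Set.Ioo_subset_Icc_self hs), excess]
  ring

/-- Test the scheme with `(v_i - k)⁺`: the matching energy `∑ truncPrimitive a k v_i` vanishes
initially since `k` lies above the initial data. -/
theorem energy_le (hS : IsBoundedDriftScheme n T a γ v d F) (hn : 0 < n)
    (ha : Continuous a) (hca : ∀ x, c ≤ a x) (hk : ∀ i ∈ Finset.Icc 1 n, v i 0 ≤ k)
    (χ : ℕ → ℝ → ℝ) (hχc : ∀ i ∈ Finset.Icc 1 (n - 1), ContinuousOn (χ i) (Set.Icc 0 T))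
    (hχ : ∀ i ∈ Finset.Icc 1 (n - 1), ∀ s ∈ Set.Icc 0 T, 0 ≤ χ i s)
    (hact : ∀ i ∈ Finset.Icc 1 (n - 1), ∀ s ∈ Set.Icc 0 T, k < v i s ∨ k < v (i + 1) s → 1 ≤ χ i s)
    {t : ℝ} (ht : t ∈ Set.Icc 0 T) :
    c / 2 * sumSq n (excess k (v · t))
        + (n : ℝ) ^ 2 / 2 * ∫ s in 0..t, sumSqDiff n (excess k (v · s))
      ≤ γ ^ 2 / 2 * ∫ s in 0..t, ∑ i ∈ Finset.Icc 1 (n - 1), χ i s := by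
  set E := fun s => ∑ i ∈ Finset.Icc 1 n, truncPrimitive a k (v i s)
  set D := fun s => sumSqDiff n (excess k (v · s))
  set X := fun s => ∑ i ∈ Finset.Icc 1 (n - 1), χ i s
  have hsub : Set.Icc 0 t ⊆ Set.Icc 0 T := Set.Icc_subset_Icc le_rfl ht.2
  have hD : ContinuousOn D (Set.Icc 0 t) := (hS.continuousOn_sumSqDiff_excess k).mono hsub
  have hX : ContinuousOn X (Set.Icc 0 t) := (continuousOn_finsetSum _ hχc).mono hsub
  have hP : Continuous (truncPrimitive a k) :=
    continuous_iff_continuousAt.2 fun s => (hasDerivAt_truncPrimitive ha s).continuousAt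
  have hE_cont : ContinuousOn E (Set.Icc 0 t) :=
    continuousOn_finsetSum _ fun i hi => (hP.comp_continuousOn (hS.continuousOn hi)).mono hsub
  have hE_deriv : ∀ s ∈ Set.Ioo 0 t, HasDerivWithinAt E
      (n * ∑ i ∈ Finset.Icc 1 n, (F i s - F (i - 1) s) * excess k (v · s) i) (Set.Ioi s) s :=
    fun s hs => (hS.hasDerivAt_sum_truncPrimitive ha ⟨hs.1, hs.2.trans_le ht.2⟩).hasDerivWithinAt
  have h_ftc := intervalIntegral.sub_le_integral_of_hasDeriv_right_of_le ht.1 hE_cont hE_deriv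
    (φ := fun s => -((n : ℝ) ^ 2 / 2) * D s + γ ^ 2 / 2 * X s)
    (((continuousOn_const.mul hD).add (continuousOn_const.mul hX)).integrableOn_Icc)
    fun s hs => mul_sum_flux_sub_mul_excess_le hn (F · s) (χ · s) (hS.flux_zero s)
      (hS.flux_last s) (fun i hi => hS.abs_flux_sub_le i hi s (hsub (Set.Ioo_subset_Icc_self hs)))
      (fun i hi => hχ i hi s (hsub (Set.Ioo_subset_Icc_self hs)))
      (fun i hi => hact i hi s (hsub (Set.Ioo_subset_Icc_self hs)))
  have hE0 : E 0 = 0 := Finset.sum_eq_zero fun i hi => truncPrimitive_of_le (hk i hi)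
  have hEt : c / 2 * sumSq n (excess k (v · t)) ≤ E t := by
    rw [sumSq, Finset.mul_sum]
    exact Finset.sum_le_sum fun i _ => mul_sq_le_truncPrimitive ha hca (v i t)
  rw [intervalIntegral.integral_add ((hD.intervalIntegrable_of_Icc ht.1).const_mul _)
    ((hX.intervalIntegrable_of_Icc ht.1).const_mul _), intervalIntegral.integral_const_mul,
    intervalIntegral.integral_const_mul, hE0] at h_ftc
  linarith

lemma excessIntegral_nonneg (hT : 0 ≤ T) : 0 ≤ excessIntegral n T v k :=
  intervalIntegral.integral_nonneg hT fun _ _ => sumSq_nonneg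

lemma integral_sumSq_excess_le (hS : IsBoundedDriftScheme n T a γ v d F) {t : ℝ}
    (ht : t ∈ Set.Icc 0 T) :
    ∫ s in 0..t, sumSq n (excess k (v · s)) ≤ excessIntegral n T v k :=
  intervalIntegral.integral_mono_interval le_rfl ht.1 ht.2
    (Filter.Eventually.of_forall fun _ => sumSq_nonneg)
    ((hS.continuousOn_sumSq_excess k).intervalIntegrable_of_Icc (ht.1.trans ht.2))

lemma excessIntegral_anti (hS : IsBoundedDriftScheme n T a γ v d F) (hT : 0 ≤ T) {k' : ℝ}
    (h : k ≤ k') : excessIntegral n T v k' ≤ excessIntegral n T v k :=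
  intervalIntegral.integral_mono_on hT
    ((hS.continuousOn_sumSq_excess k').intervalIntegrable_of_Icc hT)
    ((hS.continuousOn_sumSq_excess k).intervalIntegrable_of_Icc hT)
    fun _ _ => sumSq_excess_anti h

theorem sumSq_excess_le (hS : IsBoundedDriftScheme n T a γ v d F) (hn : 0 < n) (hc : 0 < c)
    (ha : Continuous a) (hca : ∀ x, c ≤ a x) (hk : ∀ i ∈ Finset.Icc 1 n, v i 0 ≤ k) {t : ℝ}
    (ht : t ∈ Set.Icc 0 T) :
    sumSq n (excess k (v · t)) ≤ γ ^ 2 * n * T / c := by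
  have h := hS.energy_le hn ha hca hk (fun _ _ => 1) (fun _ _ => continuousOn_const)
    (fun _ _ _ _ => zero_le_one) (fun _ _ _ _ _ => le_rfl) ht
  have h_diss : 0 ≤ (n : ℝ) ^ 2 / 2 * ∫ s in 0..t, sumSqDiff n (excess k (v · s)) :=
    mul_nonneg (by positivity) (intervalIntegral.integral_nonneg ht.1 fun _ _ => sumSqDiff_nonneg)
  have h_edges : ((n - 1 : ℕ) : ℝ) ≤ n := by exact_mod_cast Nat.sub_le n 1
  simp only [Finset.sum_const, Nat.card_Icc, Nat.add_sub_cancel, nsmul_eq_mul, mul_one,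
    intervalIntegral.integral_const, sub_zero, smul_eq_mul] at h
  rw [le_div_iff₀ hc]
  nlinarith [mul_le_mul h_edges ht.2 ht.1 (Nat.cast_nonneg n), sq_nonneg γ,
    mul_nonneg (sq_nonneg γ) (mul_nonneg (Nat.cast_nonneg n) (ht.1.trans ht.2))]

/-- The active edges at level `k + δ` are counted by Chebyshev's inequality at level `k`. -/
theorem energy_add_le (hS : IsBoundedDriftScheme n T a γ v d F) (hn : 0 < n)
    (ha : Continuous a) (hca : ∀ x, c ≤ a x) (hk : ∀ i ∈ Finset.Icc 1 n, v i 0 ≤ k) {δ : ℝ}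
    (hδ : 0 < δ) {t : ℝ} (ht : t ∈ Set.Icc 0 T) :
    c / 2 * sumSq n (excess (k + δ) (v · t))
        + (n : ℝ) ^ 2 / 2 * ∫ s in 0..t, sumSqDiff n (excess (k + δ) (v · s))
      ≤ γ ^ 2 / δ ^ 2 * excessIntegral n T v k := by
  set χ : ℕ → ℝ → ℝ := fun i s => (excess k (v · s) i ^ 2 + excess k (v · s) (i + 1) ^ 2) / δ ^ 2
  have hmem : ∀ i ∈ Finset.Icc 1 (n - 1), i ∈ Finset.Icc 1 n ∧ i + 1 ∈ Finset.Icc 1 n := by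
    intro i hi; simp only [Finset.mem_Icc] at hi ⊢; omega
  have hχc : ∀ i ∈ Finset.Icc 1 (n - 1), ContinuousOn (χ i) (Set.Icc 0 T) := fun i hi => by
    have := hS.continuousOn (hmem i hi).1
    have := hS.continuousOn (hmem i hi).2
    simp only [χ, excess]; fun_prop
  have h := hS.energy_le hn ha hca (fun i hi => (hk i hi).trans (le_add_of_nonneg_right hδ.le))
    χ hχc (fun _ _ _ _ => by positivity) (fun _ _ _ _ hact => one_le_div_sq_of_lt hδ hact) ht
  have h_sum : ∀ s, ∑ i ∈ Finset.Icc 1 (n - 1), χ i s ≤ 2 / δ ^ 2 * sumSq n (excess k (v · s)) := by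
    intro s
    rw [← Finset.sum_div, Finset.sum_add_distrib, div_mul_eq_mul_div, two_mul]
    gcongr
    · exact Finset.sum_le_sum_of_subset_of_nonneg (Finset.Icc_subset_Icc le_rfl (Nat.sub_le n 1))
        fun _ _ _ => sq_nonneg _
    · exact sum_sq_succ_le_sumSq
  have h_int : ∫ s in 0..t, ∑ i ∈ Finset.Icc 1 (n - 1), χ i s
      ≤ 2 / δ ^ 2 * excessIntegral n T v k := by
    have hsub : Set.Icc 0 t ⊆ Set.Icc 0 T := Set.Icc_subset_Icc le_rfl ht.2
    calc ∫ s in 0..t, ∑ i ∈ Finset.Icc 1 (n - 1), χ i s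
        ≤ ∫ s in 0..t, 2 / δ ^ 2 * sumSq n (excess k (v · s)) :=
          intervalIntegral.integral_mono_on ht.1
            (((continuousOn_finsetSum _ hχc).mono hsub).intervalIntegrable_of_Icc ht.1)
            ((((hS.continuousOn_sumSq_excess k).mono hsub).intervalIntegrable_of_Icc
              ht.1).const_mul _) fun s _ => h_sum s
      _ ≤ 2 / δ ^ 2 * excessIntegral n T v k := by
          rw [intervalIntegral.integral_const_mul]
          exact mul_le_mul_of_nonneg_left (hS.integral_sumSq_excess_le ht) (by positivity)
  calc _ ≤ γ ^ 2 / 2 * ∫ s in 0..t, ∑ i ∈ Finset.Icc 1 (n - 1), χ i s := h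
    _ ≤ γ ^ 2 / 2 * (2 / δ ^ 2 * excessIntegral n T v k) := by gcongr
    _ = _ := by ring

theorem sumSq_excess_add_le_excessIntegral (hS : IsBoundedDriftScheme n T a γ v d F)
    (hn : 0 < n) (hc : 0 < c) (ha : Continuous a) (hca : ∀ x, c ≤ a x)
    (hk : ∀ i ∈ Finset.Icc 1 n, v i 0 ≤ k) {δ : ℝ} (hδ : 0 < δ) {t : ℝ} (ht : t ∈ Set.Icc 0 T) :
    sumSq n (excess (k + δ) (v · t)) ≤ 2 * γ ^ 2 / (c * δ ^ 2) * excessIntegral n T v k := by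
  have h := hS.energy_add_le hn ha hca hk hδ ht
  have h_diss : 0 ≤ (n : ℝ) ^ 2 / 2 * ∫ s in 0..t, sumSqDiff n (excess (k + δ) (v · s)) :=
    mul_nonneg (by positivity) (intervalIntegral.integral_nonneg ht.1 fun _ _ => sumSqDiff_nonneg)
  calc sumSq n (excess (k + δ) (v · t)) = 2 / c * (c / 2 * sumSq n (excess (k + δ) (v · t))) := by
        field_simp
    _ ≤ 2 / c * (γ ^ 2 / δ ^ 2 * excessIntegral n T v k) :=
        mul_le_mul_of_nonneg_left (by linarith) (by positivity)
    _ = _ := by field_simp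

theorem integral_sumSqDiff_excess_add_le (hS : IsBoundedDriftScheme n T a γ v d F) (hn : 0 < n)
    (hc : 0 < c) (ha : Continuous a) (hca : ∀ x, c ≤ a x) (hk : ∀ i ∈ Finset.Icc 1 n, v i 0 ≤ k)
    {δ : ℝ} (hδ : 0 < δ) (hT : 0 ≤ T) :
    ∫ s in 0..T, sumSqDiff n (excess (k + δ) (v · s))
      ≤ 2 * γ ^ 2 / (n ^ 2 * δ ^ 2) * excessIntegral n T v k := by
  have h := hS.energy_add_le hn ha hca hk hδ ⟨hT, le_rfl⟩
  have h_sup : 0 ≤ c / 2 * sumSq n (excess (k + δ) (v · T)) :=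
    mul_nonneg (by positivity) sumSq_nonneg
  calc ∫ s in 0..T, sumSqDiff n (excess (k + δ) (v · s))
      = 2 / n ^ 2 * (n ^ 2 / 2 * ∫ s in 0..T, sumSqDiff n (excess (k + δ) (v · s))) := by
        field_simp
    _ ≤ 2 / n ^ 2 * (γ ^ 2 / δ ^ 2 * excessIntegral n T v k) :=
        mul_le_mul_of_nonneg_left (by linarith) (by positivity)
    _ = _ := by field_simp

/-- One step of the De Giorgi iteration, through the intermediate level `k + δ`. -/
theorem excessIntegral_add_two_mul_le (hS : IsBoundedDriftScheme n T a γ v d F) (hn : 0 < n)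
    (hc : 0 < c) (ha : Continuous a) (hca : ∀ x, c ≤ a x) (hk : ∀ i ∈ Finset.Icc 1 n, v i 0 ≤ k)
    {δ : ℝ} (hδ : 0 < δ) (hT : 0 ≤ T) :
    excessIntegral n T v (k + 2 * δ)
      ≤ 4 * γ ^ 2 * (2 * γ ^ 2 / δ ^ 2 + 1) / (c * δ ^ 4) * excessIntegral n T v k ^ 2 / n := by
  set I := excessIntegral n T v k
  set S := 2 * γ ^ 2 / (c * δ ^ 2) * I
  have hS0 : 0 ≤ S := by have : 0 ≤ I := excessIntegral_nonneg hT; positivity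
  have h_pt : ∀ s ∈ Set.Icc 0 T, sumSq n (excess (k + 2 * δ) (v · s))
      ≤ S / δ ^ 2 * (2 * n * sumSqDiff n (excess (k + δ) (v · s))
          + 2 / n * sumSq n (excess (k + δ) (v · s))) := fun s hs => by
    have h_dd := sumSqDiff_nonneg (n := n) (u := excess (k + δ) (v · s))
    have h_e := sumSq_nonneg (n := n) (u := excess (k + δ) (v · s))
    rw [show k + 2 * δ = k + δ + δ by ring]
    calc _ ≤ _ := sumSq_excess_add_le hδ
      _ ≤ (2 * (n * sumSqDiff n (excess (k + δ) (v · s)))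
            + 2 * (sumSq n (excess (k + δ) (v · s)) / n)) * S / δ ^ 2 := by
          gcongr; exact hS.sumSq_excess_add_le_excessIntegral hn hc ha hca hk hδ hs
      _ = _ := by ring
  have hD := (hS.continuousOn_sumSqDiff_excess (k + δ)).intervalIntegrable_of_Icc (μ := volume) hT
  have hE := (hS.continuousOn_sumSq_excess (k + δ)).intervalIntegrable_of_Icc (μ := volume) hT
  calc excessIntegral n T v (k + 2 * δ)
      ≤ ∫ s in 0..T, S / δ ^ 2 * (2 * n * sumSqDiff n (excess (k + δ) (v · s))
          + 2 / n * sumSq n (excess (k + δ) (v · s))) :=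
        intervalIntegral.integral_mono_on hT
          ((hS.continuousOn_sumSq_excess _).intervalIntegrable_of_Icc hT)
          (((hD.const_mul _).add (hE.const_mul _)).const_mul _) h_pt
    _ = S / δ ^ 2 * (2 * n * (∫ s in 0..T, sumSqDiff n (excess (k + δ) (v · s)))
          + 2 / n * excessIntegral n T v (k + δ)) := by
        rw [intervalIntegral.integral_const_mul, intervalIntegral.integral_add (hD.const_mul _)
          (hE.const_mul _), intervalIntegral.integral_const_mul,
          intervalIntegral.integral_const_mul, excessIntegral]
    _ ≤ S / δ ^ 2 * (2 * n * (2 * γ ^ 2 / (n ^ 2 * δ ^ 2) * I) + 2 / n * I) := by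
        gcongr
        · exact hS.integral_sumSqDiff_excess_add_le hn hc ha hca hk hδ hT
        · exact hS.excessIntegral_anti hT (by linarith)
    _ = _ := by have : (0 : ℝ) < n := Nat.cast_pos.2 hn; simp only [S]; field_simp; ring

theorem excessIntegral_le (hS : IsBoundedDriftScheme n T a γ v d F) (hn : 0 < n) (hc : 0 < c)
    (ha : Continuous a) (hca : ∀ x, c ≤ a x) (hk : ∀ i ∈ Finset.Icc 1 n, v i 0 ≤ k)
    (hT : 0 ≤ T) : excessIntegral n T v k ≤ γ ^ 2 * n * T ^ 2 / c :=
  calc excessIntegral n T v k ≤ ∫ _ in 0..T, γ ^ 2 * n * T / c :=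
        intervalIntegral.integral_mono_on hT
          ((hS.continuousOn_sumSq_excess k).intervalIntegrable_of_Icc hT) intervalIntegrable_const
          fun _ hs => hS.sumSq_excess_le hn hc ha hca hk hs
    _ = _ := by rw [intervalIntegral.integral_const, smul_eq_mul]; ring

theorem excessIntegral_level_succ_le (hS : IsBoundedDriftScheme n T a γ v d F) (hn : 0 < n)
    (hc : 0 < c) (ha : Continuous a) (hca : ∀ x, c ≤ a x) {K : ℝ} (hK : 1 ≤ K)
    (hk : ∀ i ∈ Finset.Icc 1 n, v i 0 ≤ K) (hT : 0 ≤ T) (m : ℕ) :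
    excessIntegral n T v (2 * K - K / 2 ^ (m + 1)) / n
      ≤ 16384 * γ ^ 2 * (2 * γ ^ 2 + 1) / (c * K ^ 4) * 64 ^ m
          * (excessIntegral n T v (2 * K - K / 2 ^ m) / n) ^ 2 := by
  have hn' : (0 : ℝ) < n := Nat.cast_pos.2 hn
  have hK2 : K / 2 ^ m ≤ K := div_le_self (by linarith) (one_le_pow₀ (by norm_num))
  have hk' : ∀ i ∈ Finset.Icc 1 n, v i 0 ≤ 2 * K - K / 2 ^ m := fun i hi => by
    linarith [hk i hi]
  have h := hS.excessIntegral_add_two_mul_le hn hc ha hca hk' (δ := K / 2 ^ (m + 2))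
    (by positivity) hT
  rw [show 2 * K - K / 2 ^ m + 2 * (K / 2 ^ (m + 2)) = 2 * K - K / 2 ^ (m + 1) by
    field_simp; ring] at h
  set A := 4 * γ ^ 2 * (2 * γ ^ 2 / (K / 2 ^ (m + 2)) ^ 2 + 1) / (c * (K / 2 ^ (m + 2)) ^ 4)
  calc _ ≤ A * excessIntegral n T v (2 * K - K / 2 ^ m) ^ 2 / n / n :=
        div_le_div_of_nonneg_right h hn'.le
    _ = A * (excessIntegral n T v (2 * K - K / 2 ^ m) / n) ^ 2 := by ring
    _ ≤ _ := by gcongr; exact deGiorgi_coeff_le hc hK m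

theorem excessIntegral_two_mul_deGiorgiLevel_nonpos (hS : IsBoundedDriftScheme n T a γ v d F)
    (hn : 0 < n) (hc : 0 < c) (ha : Continuous a) (hca : ∀ x, c ≤ a x)
    (hK₀ : ∀ i ∈ Finset.Icc 1 n, v i 0 ≤ K₀) (hT : 0 ≤ T) :
    excessIntegral n T v (2 * deGiorgiLevel c γ K₀ T) ≤ 0 := by
  set K := deGiorgiLevel c γ K₀ T
  have hK1 : 1 ≤ K := le_max_left _ _
  have hk : ∀ i ∈ Finset.Icc 1 n, v i 0 ≤ K := fun i hi =>
    (hK₀ i hi).trans ((le_max_left K₀ _).trans (le_max_right 1 _))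
  have hKW : 2 ^ 20 * γ ^ 4 * (2 * γ ^ 2 + 1) * T ^ 2 / c ^ 2 ≤ K ^ 4 :=
    ((le_max_right _ _).trans (le_max_right _ _)).trans (le_self_pow₀ hK1 (by norm_num))
  have hn' : (0 : ℝ) < n := Nat.cast_pos.2 hn
  set Y : ℕ → ℝ := fun m => excessIntegral n T v (2 * K - K / 2 ^ m) / n
  set C := 16384 * γ ^ 2 * (2 * γ ^ 2 + 1) / (c * K ^ 4)
  have hY : ∀ m, 0 ≤ Y m := fun m => div_nonneg (excessIntegral_nonneg hT) hn'.le
  have hsmall : C * 64 * Y 0 ≤ 1 := by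
    have hY0 : Y 0 ≤ γ ^ 2 * T ^ 2 / c := by
      simp only [Y, pow_zero, div_one, two_mul, add_sub_cancel_right]
      rw [div_le_iff₀ hn']
      exact (hS.excessIntegral_le hn hc ha hca hk hT).trans_eq (by ring)
    calc C * 64 * Y 0 ≤ C * 64 * (γ ^ 2 * T ^ 2 / c) := by gcongr
      _ = 2 ^ 20 * γ ^ 4 * (2 * γ ^ 2 + 1) * T ^ 2 / c ^ 2 / K ^ 4 := by
          simp only [C]; field_simp; ring
      _ ≤ 1 := div_le_one_of_le₀ hKW (by positivity)
  have h_decay := le_div_pow_of_le_mul_pow_mul_sq (by norm_num) (by positivity) hY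
    (hS.excessIntegral_level_succ_le hn hc ha hca hK1 hk hT) hsmall
  refine ge_of_tendsto' ((tendsto_const_nhds (x := (n : ℝ) * Y 0)).div_atTop
    (tendsto_pow_atTop_atTop_of_one_lt (by norm_num : (1 : ℝ) < 64))) fun m => ?_
  calc excessIntegral n T v (2 * K) ≤ excessIntegral n T v (2 * K - K / 2 ^ m) :=
        hS.excessIntegral_anti hT (sub_le_self _ (by positivity))
    _ = n * Y m := by simp only [Y]; field_simp
    _ ≤ n * (Y 0 / 64 ^ m) := by gcongr; exact h_decay m
    _ = n * Y 0 / 64 ^ m := by ring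

theorem le_three_mul_deGiorgiLevel (hS : IsBoundedDriftScheme n T a γ v d F) (hc : 0 < c)
    (ha : Continuous a) (hca : ∀ x, c ≤ a x) (hK₀ : ∀ i ∈ Finset.Icc 1 n, v i 0 ≤ K₀) {t : ℝ}
    (ht : t ∈ Set.Icc 0 T) {i : ℕ} (hi : i ∈ Finset.Icc 1 n) :
    v i t ≤ 3 * deGiorgiLevel c γ K₀ T := by
  have hn : 0 < n := by simp only [Finset.mem_Icc] at hi; omega
  set K := deGiorgiLevel c γ K₀ T
  have hK : 0 < K := one_pos.trans_le (le_max_left _ _)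
  have hK₀K : K₀ ≤ K := (le_max_left K₀ _).trans (le_max_right 1 _)
  have hk : ∀ j ∈ Finset.Icc 1 n, v j 0 ≤ 2 * K := fun j hj => (hK₀ j hj).trans (by linarith)
  have h_null := hS.excessIntegral_two_mul_deGiorgiLevel_nonpos hn hc ha hca hK₀ (ht.1.trans ht.2)
  have h_sq : max (v i t - (2 * K + K)) 0 ^ 2 ≤ 0 :=
    (sq_le_sumSq (u := excess (2 * K + K) (v · t)) hi).trans <|
      (hS.sumSq_excess_add_le_excessIntegral hn hc ha hca hk hK ht).trans <|
        mul_nonpos_of_nonneg_of_nonpos (by positivity) h_null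
  nlinarith [le_max_left (v i t - (2 * K + K)) 0]

theorem abs_le_three_mul_deGiorgiLevel (hS : IsBoundedDriftScheme n T a γ v d F) (hc : 0 < c)
    (ha : Continuous a) (hca : ∀ x, c ≤ a x) (hK₀ : ∀ i ∈ Finset.Icc 1 n, |v i 0| ≤ K₀) {t : ℝ}
    (ht : t ∈ Set.Icc 0 T) {i : ℕ} (hi : i ∈ Finset.Icc 1 n) :
    |v i t| ≤ 3 * deGiorgiLevel c γ K₀ T := by
  have h_upper := hS.le_three_mul_deGiorgiLevel hc ha hca
    (fun j hj => (le_abs_self _).trans (hK₀ j hj)) ht hi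
  have h_lower := hS.neg.le_three_mul_deGiorgiLevel hc (ha.comp continuous_neg) (fun x => hca (-x))
    (fun j hj => (neg_le_abs _).trans (hK₀ j hj)) ht hi
  exact abs_le.2 ⟨by linarith, h_upper⟩

end IsBoundedDriftScheme

lemma abs_cellAvg_le {n j : ℕ} {f : ℝ → ℝ} {C : ℝ} (hj : j ∈ Finset.Icc 1 n)
    (hf : ∀ x ∈ Set.Icc (0 : ℝ) 1, |f x| ≤ C) : |cellAvg n f j| ≤ C := by
  simp only [Finset.mem_Icc] at hj
  have hn : (0 : ℝ) < n := by exact_mod_cast (by omega : 0 < n)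
  have hj1 : (1 : ℝ) ≤ j := by exact_mod_cast hj.1
  have hjn : (j : ℝ) ≤ n := by exact_mod_cast hj.2
  have h_cell : ((j : ℝ) - 1) / n ≤ j / n := by gcongr; linarith
  have h_int := intervalIntegral.norm_integral_le_of_norm_le_const (a := ((j : ℝ) - 1) / n)
    (b := j / n) (C := C) (f := f) fun x hx => by
      rw [Set.uIoc_of_le h_cell] at hx
      exact hf x ⟨(div_nonneg (by linarith) hn.le).trans hx.1.le,
        hx.2.trans ((div_le_one hn).2 hjn)⟩
  rw [Real.norm_eq_abs, show (j : ℝ) / n - (j - 1) / n = 1 / n by ring,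
    abs_of_pos (by positivity : (0 : ℝ) < 1 / n)] at h_int
  rw [cellAvg, abs_mul, abs_of_pos hn]
  calc n * |∫ x in ((j : ℝ) - 1) / n..j / n, f x| ≤ n * (C * (1 / n)) := by gcongr
    _ = C := by field_simp

theorem IsFVMSol.isBoundedDriftScheme {T : ℝ} {n : ℕ} {h' b : ℝ → ℝ} {p : ℝ → ℝ → ℝ}
    {v₀ : ℝ → ℝ} {v d : ℕ → ℝ → ℝ} {Cb M : ℝ} (hsol : IsFVMSol T n h' b p v₀ v d)
    (hb : ∀ x, |b x| ≤ Cb) (hp : ∀ t ∈ Set.Icc (0 : ℝ) T, ∀ x ∈ Set.Icc (0 : ℝ) 1, |p t x| ≤ M) :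
    IsBoundedDriftScheme n T h' (Cb * M) v d (fvmFlux n b p v) where
  hasDerivWithinAt i hi t ht := (hsol.2.1 i hi t ht).1
  balance i hi t ht := (hsol.2.1 i hi t ht).2
  flux_zero t := if_neg (by omega)
  flux_last t := if_neg (by omega)
  abs_flux_sub_le i hi t ht := by
    have hi' : i ∈ Finset.Icc 1 n := by simp only [Finset.mem_Icc] at hi ⊢; omega
    rw [fvmFlux, if_pos (Finset.mem_Icc.1 hi), add_sub_cancel_left, abs_mul]
    exact mul_le_mul (hb _) (abs_cellAvg_le hi' (hp t ht)) (abs_nonneg _)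
      ((abs_nonneg _).trans (hb 0))

lemma abs_le_abs_add_integral_abs {f f' : ℝ → ℝ} (hf' : IntervalIntegrable f' volume 0 1)
    (hf : ∀ x ∈ Set.Icc (0 : ℝ) 1, f x = f 0 + ∫ y in 0..x, f' y) :
    ∀ x ∈ Set.Icc (0 : ℝ) 1, |f x| ≤ |f 0| + ∫ y in 0..1, |f' y| := fun x hx => by
  rw [hf x hx]
  refine (abs_add_le _ _).trans (add_le_add le_rfl ?_)
  exact (intervalIntegral.abs_integral_le_integral_abs hx.1).trans
    (intervalIntegral.integral_mono_interval le_rfl hx.1 hx.2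
      (Filter.Eventually.of_forall fun _ => abs_nonneg _) hf'.abs)

theorem stmt_8_general
    (T : ℝ)
    (h' h'' b b' b'' : ℝ → ℝ) (Ch1 Ch2 Cb1 Cb2 : ℝ)
    (hCh1 : 0 < Ch1) (hCb1 : 0 < Cb1)
    (hh'deriv : ∀ x : ℝ, HasDerivAt h' (h'' x) x)
    (hA1 : ∀ x : ℝ, Ch1 ≤ h' x ∧ h' x ≤ Ch2 ∧ |h'' x| ≤ Ch2)
    (hA2 : ∀ x : ℝ, Cb1 ≤ b x ∧ b x ≤ Cb2 ∧ |b' x| ≤ Cb2 ∧ |b'' x| ≤ Cb2)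
    (p : ℝ → ℝ → ℝ) (M : ℝ)
    -- p ∈ L^∞((0,T)×(0,1))
    (hpinf : ∀ t ∈ Set.Icc (0:ℝ) T, ∀ x ∈ Set.Icc (0:ℝ) 1, |p t x| ≤ M)
    -- v₀ ∈ H¹(0,1)
    (v₀ v₀' : ℝ → ℝ)
    (hv₀int : IntervalIntegrable v₀' volume 0 1)
    (hv₀AC : ∀ x ∈ Set.Icc (0:ℝ) 1, v₀ x = v₀ 0 + ∫ y in (0:ℝ)..x, v₀' y) :
    ∃ C₆ : ℝ, 0 < C₆ ∧ ∀ n : ℕ, 3 ≤ n → ∀ v d : ℕ → ℝ → ℝ,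
      IsFVMSol T n h' b p v₀ v d →
      ∀ t ∈ Set.Icc (0:ℝ) T, ∀ i ∈ Finset.Icc 1 n,
        |v i t| ≤ C₆ ∧
        |v i t| ≤ Real.sqrt ((1 / (n:ℝ)) * ∑ k ∈ Finset.Icc 2 n,
                      ((v k t - v (k - 1) t) / (1 / (n:ℝ)))^2)
                  + Real.sqrt ((1 / (n:ℝ)) * ∑ j ∈ Finset.Icc 1 n, (v j t)^2) := by
  have hh' : Continuous h' := continuous_iff_continuousAt.2 fun x => (hh'deriv x).continuousAt
  have hb : ∀ x, |b x| ≤ Cb2 := fun x =>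
    abs_le.2 ⟨by linarith [(hA2 x).1, (hA2 x).2.1], (hA2 x).2.1⟩
  have hv₀ := abs_le_abs_add_integral_abs hv₀int hv₀AC
  refine ⟨3 * deGiorgiLevel Ch1 (Cb2 * M) (|v₀ 0| + ∫ y in (0:ℝ)..1, |v₀' y|) T,
    mul_pos three_pos (one_pos.trans_le (le_max_left _ _)),
    fun n _ v d hsol t ht i hi => ⟨?_, ?_⟩⟩
  · exact (hsol.isBoundedDriftScheme hb hpinf).abs_le_three_mul_deGiorgiLevel hCh1 hh'
      (fun x => (hA1 x).1) (fun j hj => (hsol.2.2 j hj).symm ▸ abs_cellAvg_le hj hv₀) ht hi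
  · rw [inv_mul_sum_Icc_two_sq_div_eq, one_div_mul_eq_div]
    exact abs_le_sqrt_mul_sumSqDiff_add_sqrt (u := (v · t)) hi

/-- **Uniform L^∞ bound on the approximate solutions (Lemma 4.2).**
Under (A1), (A2), `p ∈ W^{1,2}(0,T;L²) ∩ L^∞(Q(T)) ∩ L²(0,T;H¹)` and `v₀ ∈ H¹(0,1)`,
there is `C₆ > 0` independent of `n ≥ 3` such that `|v^{(n)}| ≤ C₆` on `(0,T)×(0,1)`;
in fact `|v_i(t)| ≤ ‖ṽ^{(n)}(t)‖_{L²(0,1)} + ‖v^{(n)}(t)‖_{L²(0,1)}` for every `t,i`. -/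
theorem stmt_8
    (T : ℝ) (hT : 0 < T)
    (h h' h'' b b' b'' : ℝ → ℝ) (Ch1 Ch2 Cb1 Cb2 : ℝ)
    (hCh1 : 0 < Ch1) (hCh2 : 0 < Ch2) (hCb1 : 0 < Cb1) (hCb2 : 0 < Cb2)
    (hhderiv : ∀ x : ℝ, HasDerivAt h (h' x) x)
    (hh'deriv : ∀ x : ℝ, HasDerivAt h' (h'' x) x)
    (hh''cont : Continuous h'')
    (hA1 : ∀ x : ℝ, Ch1 ≤ h' x ∧ h' x ≤ Ch2 ∧ |h'' x| ≤ Ch2)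
    (hbderiv : ∀ x : ℝ, HasDerivAt b (b' x) x)
    (hb'deriv : ∀ x : ℝ, HasDerivAt b' (b'' x) x)
    (hb''cont : Continuous b'')
    (hA2 : ∀ x : ℝ, Cb1 ≤ b x ∧ b x ≤ Cb2 ∧ |b' x| ≤ Cb2 ∧ |b'' x| ≤ Cb2)
    (p pt px : ℝ → ℝ → ℝ) (M : ℝ)
    -- p ∈ W^{1,2}(0,T; L²(0,1)) with time derivative pt
    (hpW : ∀ᵐ x ∂(volume.restrict (Set.Ioo (0:ℝ) 1)),
        IntervalIntegrable (fun t => pt t x) volume 0 T ∧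
        ∀ t ∈ Set.Icc (0:ℝ) T, p t x = p 0 x + ∫ s in (0:ℝ)..t, pt s x)
    (hpL2 : ∀ t ∈ Set.Icc (0:ℝ) T,
        IntervalIntegrable (fun x => p t x) volume 0 1 ∧
        IntervalIntegrable (fun x => (p t x)^2) volume 0 1)
    (hptL2 : ∀ᵐ t ∂(volume.restrict (Set.Ioo (0:ℝ) T)),
        IntervalIntegrable (fun x => (pt t x)^2) volume 0 1)
    (hptT : IntervalIntegrable (fun t => ∫ x in (0:ℝ)..1, (pt t x)^2) volume 0 T)
    -- p ∈ L^∞((0,T)×(0,1))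
    (hpinf : ∀ t ∈ Set.Icc (0:ℝ) T, ∀ x ∈ Set.Icc (0:ℝ) 1, |p t x| ≤ M)
    -- p ∈ L²(0,T; H¹(0,1)) with spatial derivative px
    (hpH1 : ∀ᵐ t ∂(volume.restrict (Set.Ioo (0:ℝ) T)),
        IntervalIntegrable (fun x => px t x) volume 0 1 ∧
        IntervalIntegrable (fun x => (px t x)^2) volume 0 1 ∧
        ∀ x ∈ Set.Icc (0:ℝ) 1, p t x = p t 0 + ∫ y in (0:ℝ)..x, px t y)
    (hpxT : IntervalIntegrable (fun t => ∫ x in (0:ℝ)..1, (px t x)^2) volume 0 T)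
    -- v₀ ∈ H¹(0,1)
    (v₀ v₀' : ℝ → ℝ)
    (hv₀int : IntervalIntegrable v₀' volume 0 1)
    (hv₀AC : ∀ x ∈ Set.Icc (0:ℝ) 1, v₀ x = v₀ 0 + ∫ y in (0:ℝ)..x, v₀' y)
    (hv₀L2 : IntervalIntegrable (fun x => (v₀ x)^2) volume 0 1)
    (hv₀'L2 : IntervalIntegrable (fun x => (v₀' x)^2) volume 0 1) :
    ∃ C₆ : ℝ, 0 < C₆ ∧ ∀ n : ℕ, 3 ≤ n → ∀ v d : ℕ → ℝ → ℝ,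
      IsFVMSol T n h' b p v₀ v d →
      ∀ t ∈ Set.Icc (0:ℝ) T, ∀ i ∈ Finset.Icc 1 n,
        |v i t| ≤ C₆ ∧
        |v i t| ≤ Real.sqrt ((1 / (n:ℝ)) * ∑ k ∈ Finset.Icc 2 n,
                      ((v k t - v (k - 1) t) / (1 / (n:ℝ)))^2)
                  + Real.sqrt ((1 / (n:ℝ)) * ∑ j ∈ Finset.Icc 1 n, (v j t)^2) :=
  stmt_8_general T h' h'' b b' b'' Ch1 Ch2 Cb1 Cb2 hCh1 hCb1 hh'deriv hA1 hA2 p M hpinf v₀ v₀'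
    hv₀int hv₀AC
end

section
/- Discrete embedding inequality (key step in the proof of Lemma 4.2). Let n ≥ 2 be an integer and Δx = 1/n. Then for all real numbers v₁, …, v_n and every index i ∈ {1, …, n}: |v_i| ≤ ( Δx Σ_{k=2}^n ((v_k − v_{k-1})/Δx)² )^{1/2} + ( Δx Σ_{j=1}^n v_j² )^{1/2}. -/
/-!
Any two values of the grid function differ by at most the total variation `∑ |v k - v (k-1)|`,
so `|v i|` is bounded by the mean of `|v j|` plus the total variation. Cauchy–Schwarz bounds
the mean of `|v j|` by the discrete `L²` norm, and the total variation (a sum of at most `n`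
terms) by `(n ∑ (v k - v (k-1))²)^{1/2}`, which is the discrete `L²` norm of the difference
quotient.
-/

open Finset

lemma sum_abs_le_sqrt_card_mul_sum_sq {ι : Type*} (s : Finset ι) (f : ι → ℝ) :
    ∑ i ∈ s, |f i| ≤ √(#s * ∑ i ∈ s, f i ^ 2) :=
  Real.le_sqrt_of_sq_le <| by
    simpa only [sq_abs] using sq_sum_le_card_mul_sum_sq (s := s) (f := fun i => |f i|)

lemma sum_abs_div_card_le_sqrt_sum_sq_div_card {ι : Type*} (s : Finset ι) (f : ι → ℝ) :
    (∑ i ∈ s, |f i|) / #s ≤ √((∑ i ∈ s, f i ^ 2) / #s) := by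
  rcases s.eq_empty_or_nonempty with rfl | hs
  · simp
  have hcard : (0 : ℝ) < #s := by exact_mod_cast hs.card_pos
  calc (∑ i ∈ s, |f i|) / #s ≤ √(#s * ∑ i ∈ s, f i ^ 2) / √(#s ^ 2) := by
        rw [Real.sqrt_sq hcard.le]
        gcongr
        exact sum_abs_le_sqrt_card_mul_sum_sq s f
    _ = √((∑ i ∈ s, f i ^ 2) / #s) := by
        rw [← Real.sqrt_div' _ (by positivity)]
        congr 1
        field_simp

lemma le_sum_div_card_add_of_forall_le {ι : Type*} {s : Finset ι} (hs : s.Nonempty)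
    {f : ι → ℝ} {x D : ℝ} (h : ∀ j ∈ s, x ≤ f j + D) : x ≤ (∑ j ∈ s, f j) / #s + D := by
  have hcard : (0 : ℝ) < #s := by exact_mod_cast hs.card_pos
  have hsum : #s * x ≤ ∑ j ∈ s, f j + #s * D := by
    simpa [sum_add_distrib] using sum_le_sum h
  rw [div_add' _ _ _ hcard.ne', le_div_iff₀ hcard]
  linarith

lemma abs_sub_le_sum_Icc_abs_sub (v : ℕ → ℝ) {i j : ℕ} (h : j ≤ i) :
    |v i - v j| ≤ ∑ k ∈ Icc (j + 1) i, |v k - v (k - 1)| := by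
  induction i, h using Nat.le_induction with
  | base => simp
  | succ i _ ih =>
    rw [sum_Icc_succ_top (by omega), Nat.add_sub_cancel]
    linarith [abs_sub_le (v (i + 1)) (v i) (v j)]

lemma abs_sub_le_sum_Icc_abs_sub_of_mem (v : ℕ → ℝ) {a b i j : ℕ} (hi : i ∈ Icc a b)
    (hj : j ∈ Icc a b) : |v i - v j| ≤ ∑ k ∈ Icc (a + 1) b, |v k - v (k - 1)| := by
  wlog h : j ≤ i generalizing i j
  · rw [abs_sub_comm]
    exact this hj hi (by omega)
  rw [mem_Icc] at hi hj
  exact (abs_sub_le_sum_Icc_abs_sub v h).trans <| sum_le_sum_of_subset_of_nonneg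
    (Icc_subset_Icc (by omega) hi.2) fun _ _ _ => abs_nonneg _

lemma one_div_mul_sum_div_one_div_sq {ι : Type*} (s : Finset ι) (f : ι → ℝ) (x : ℝ) :
    1 / x * ∑ k ∈ s, (f k / (1 / x)) ^ 2 = x * ∑ k ∈ s, f k ^ 2 := by
  rcases eq_or_ne x 0 with rfl | hx
  · simp
  · rw [mul_sum, mul_sum]
    exact sum_congr rfl fun k _ => by field_simp

theorem stmt_9_general (n : ℕ) (v : ℕ → ℝ) (i : ℕ) (hi : i ∈ Finset.Icc 1 n) :
    |v i| ≤ Real.sqrt ((1 / (n:ℝ)) * ∑ k ∈ Finset.Icc 2 n,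
              ((v k - v (k - 1)) / (1 / (n:ℝ)))^2)
          + Real.sqrt ((1 / (n:ℝ)) * ∑ j ∈ Finset.Icc 1 n, (v j)^2) := by
  have hcard : (#(Icc 1 n) : ℝ) = n := by simp
  have hmean : |v i| ≤ (∑ j ∈ Icc 1 n, |v j|) / n + ∑ k ∈ Icc 2 n, |v k - v (k - 1)| := by
    rw [← hcard]
    refine le_sum_div_card_add_of_forall_le ⟨i, hi⟩ fun j hj => ?_
    linarith [abs_sub_abs_le_abs_sub (v i) (v j), abs_sub_le_sum_Icc_abs_sub_of_mem v hi hj]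
  have hL2 : (∑ j ∈ Icc 1 n, |v j|) / n ≤ √(1 / (n:ℝ) * ∑ j ∈ Icc 1 n, v j ^ 2) := by
    rw [one_div_mul_eq_div, ← hcard]
    exact sum_abs_div_card_le_sqrt_sum_sq_div_card _ _
  have hvar : ∑ k ∈ Icc 2 n, |v k - v (k - 1)| ≤ √(1 / (n:ℝ) * ∑ k ∈ Icc 2 n,
      ((v k - v (k - 1)) / (1 / (n:ℝ))) ^ 2) := by
    rw [one_div_mul_sum_div_one_div_sq]
    refine (sum_abs_le_sqrt_card_mul_sum_sq _ _).trans (Real.sqrt_le_sqrt ?_)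
    gcongr
    simp
  linarith

/-- **Discrete embedding inequality (key step in the proof of Lemma 4.2).**
For an integer `n ≥ 2`, `Δx = 1/n`, any grid function `v₁, …, v_n` and any
index `i ∈ {1,…,n}`,
`|v i| ≤ (Δx ∑_{k=2}^n ((v k − v (k−1))/Δx)²)^{1/2} + (Δx ∑_{j=1}^n (v j)²)^{1/2}`. -/
theorem stmt_9 (n : ℕ) (hn : 2 ≤ n) (v : ℕ → ℝ) (i : ℕ) (hi : i ∈ Finset.Icc 1 n) :
    |v i| ≤ Real.sqrt ((1 / (n:ℝ)) * ∑ k ∈ Finset.Icc 2 n,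
              ((v k - v (k - 1)) / (1 / (n:ℝ)))^2)
          + Real.sqrt ((1 / (n:ℝ)) * ∑ j ∈ Finset.Icc 1 n, (v j)^2) :=
  stmt_9_general n v i hi
end

section
/- Pointwise comparison inequality for the difference between a piecewise constant function and an H¹ function (inequality (esti4) in the proof of Lemma 4.1). Let n ≥ 2 be an integer, Δx = 1/n, x_i = iΔx, V_i = [x_{i−1}, x_i) for i = 1,…,n−1 and V_n = [x_{n−1}, x_n]. Let w be absolutely continuous on [0,1] with ∂_x w ∈ L²(0,1), and let s = Σ_{i=1}^n z_i 1_{V_i} with z_i ∈ ℝ. Set I₂ = ( ∫_{Δx}^1 |δ_x s(ξ) − ∂_x w(ξ)|² dξ )^{1/2} + ( ∫_{Δx}^1 |∂_x w(ξ) − ∂_x w(ξ − Δx)|² dξ )^{1/2} + 2 (Δx)^{1/2} ‖∂_x w‖_{L²(0,1)}, where δ_x s(x) = (s(x) − s(x−Δx))/Δx. Then for all x, y ∈ [Δx, 1]: |s(x) − w(x)|² ≤ |s(y) − w(y)|² + I₂ ( |s(x) − w(x)| + |s(y) − w(y)| ). -/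
/-!
Write `e = s - w` and let `x`, `y` lie in the cells with right ends `p = j Δx`, `q = k Δx`.
On each cell `δₓs` is constant with integral `z_{i+1} - z_i`, so
`s x - s y = z_j - z_k = ∫_q^p δₓs`, while `w x - w y = ∫_y^x ∂ₓw`. Hence
`e x - e y = ∫_q^p (δₓs - ∂ₓw) + ∫_q^y ∂ₓw - ∫_p^x ∂ₓw`, and Cauchy–Schwarz bounds the three terms
by `‖δₓs - ∂ₓw‖_{L²(Δx,1)}` and twice `√Δx ‖∂ₓw‖_{L²(0,1)}`, since `|p - q| ≤ 1` and
`|y - q|, |x - p| ≤ Δx`. The claim follows from `a² - b² ≤ |a - b| (|a| + |b|)`.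
-/

open MeasureTheory Set

lemma IntervalIntegrable.const_sub_sq {g : ℝ → ℝ} {a b : ℝ} (c : ℝ)
    (hg : IntervalIntegrable g volume a b)
    (hg2 : IntervalIntegrable (fun x => g x ^ 2) volume a b) :
    IntervalIntegrable (fun x => (c - g x) ^ 2) volume a b := by
  have h := ((intervalIntegrable_const (c := c ^ 2)).sub (hg.const_mul (2 * c))).add hg2
  refine h.congr_ae (Filter.Eventually.of_forall fun x => ?_)
  ring

lemma abs_intervalIntegral_le_sqrt_mul_sqrt {g : ℝ → ℝ} {a b : ℝ} (hab : a ≤ b)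
    (hg : IntervalIntegrable g volume a b)
    (hg2 : IntervalIntegrable (fun x => g x ^ 2) volume a b) :
    |∫ x in a..b, g x| ≤ √(b - a) * √(∫ x in a..b, g x ^ 2) := by
  set A := ∫ x in a..b, g x
  set B := ∫ x in a..b, g x ^ 2
  have hquad : ∀ t : ℝ, 0 ≤ (b - a) * (t * t) + (-2 * A) * t + B := fun t => by
    have hexp : ∫ x in a..b, (t - g x) ^ 2 = (b - a) * (t * t) + (-2 * A) * t + B := by
      have : (fun x => (t - g x) ^ 2) = fun x => (t ^ 2 - 2 * t * g x) + g x ^ 2 := by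
        funext x; ring
      rw [this, intervalIntegral.integral_add (intervalIntegrable_const.sub (hg.const_mul _)) hg2,
        intervalIntegral.integral_sub intervalIntegrable_const (hg.const_mul _),
        intervalIntegral.integral_const_mul, intervalIntegral.integral_const, smul_eq_mul]
      ring
    rw [← hexp]
    exact intervalIntegral.integral_nonneg hab fun x _ => sq_nonneg _
  have hAB : A ^ 2 ≤ (b - a) * B := by
    have := discrim_le_zero hquad
    rw [discrim] at this
    linarith
  calc |A| = √(A ^ 2) := (Real.sqrt_sq_eq_abs A).symm
    _ ≤ √((b - a) * B) := Real.sqrt_le_sqrt hAB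
    _ = √(b - a) * √B := Real.sqrt_mul (sub_nonneg.2 hab) B

lemma abs_intervalIntegral_le_sqrt_mul_sqrt_of_uIcc_subset {g : ℝ → ℝ} {a b c d ℓ : ℝ}
    (hsub : uIcc a b ⊆ Icc c d) (hℓ : |b - a| ≤ ℓ)
    (hg : IntervalIntegrable g volume a b)
    (hg2 : IntervalIntegrable (fun x => g x ^ 2) volume c d) :
    |∫ x in a..b, g x| ≤ √ℓ * √(∫ x in c..d, g x ^ 2) := by
  wlog hab : a ≤ b generalizing a b
  · rw [intervalIntegral.integral_symm, abs_neg]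
    exact this (uIcc_comm a b ▸ hsub) (abs_sub_comm a b ▸ hℓ) hg.symm (le_of_not_ge hab)
  have hcd : c ≤ d := (hsub left_mem_uIcc).1.trans (hsub left_mem_uIcc).2
  have hsub' : Icc a b ⊆ Icc c d := uIcc_of_le hab ▸ hsub
  have hg2' : IntervalIntegrable (fun x => g x ^ 2) volume a b :=
    hg2.mono_set (by rwa [uIcc_of_le hab, uIcc_of_le hcd])
  calc |∫ x in a..b, g x| ≤ √(b - a) * √(∫ x in a..b, g x ^ 2) :=
        abs_intervalIntegral_le_sqrt_mul_sqrt hab hg hg2'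
    _ ≤ √ℓ * √(∫ x in c..d, g x ^ 2) := by
        gcongr
        · rwa [abs_of_nonneg (sub_nonneg.2 hab)] at hℓ
        · exact intervalIntegral.integral_mono_interval (hsub' (left_mem_Icc.2 hab)).1
            hab (hsub' (right_mem_Icc.2 hab)).2
            (Filter.Eventually.of_forall fun x => sq_nonneg _) hg2

lemma sq_le_sq_add_mul_of_abs_sub_le {a b c : ℝ} (h : |a - b| ≤ c) :
    a ^ 2 ≤ b ^ 2 + c * (|a| + |b|) := by
  have hfac : a ^ 2 - b ^ 2 ≤ |a - b| * (|a| + |b|) := calc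
    a ^ 2 - b ^ 2 = (a - b) * (a + b) := by ring
    _ ≤ |a - b| * |a + b| := by rw [← abs_mul]; exact le_abs_self _
    _ ≤ |a - b| * (|a| + |b|) := mul_le_mul_of_nonneg_left (abs_add_le a b) (abs_nonneg _)
  nlinarith [mul_le_mul_of_nonneg_right h (add_nonneg (abs_nonneg a) (abs_nonneg b))]

noncomputable def backwardDiffQuot (Δx : ℝ) (s : ℝ → ℝ) (ξ : ℝ) : ℝ := (s ξ - s (ξ - Δx)) / Δx

/-- Cells are indexed from `0` here: `[i Δx, (i + 1) Δx)` is the paper's `V_{i+1}`. The closed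
right end of `V_n` is a separate hypothesis `s (n * Δx) = z n` where it is needed. -/
def IsStepFunction (Δx : ℝ) (n : ℕ) (z : ℕ → ℝ) (s : ℝ → ℝ) : Prop :=
  ∀ i < n, ∀ ξ ∈ Ico ((i : ℝ) * Δx) ((i + 1) * Δx), s ξ = z (i + 1)

section StepFunction

variable {Δx : ℝ} {n : ℕ} {z : ℕ → ℝ} {s : ℝ → ℝ}

lemma backwardDiffQuot_eqOn_cell (hs : IsStepFunction Δx n z s) {i : ℕ} (hi : 1 ≤ i)
    (hin : i < n) :
    EqOn (backwardDiffQuot Δx s) (fun _ => (z (i + 1) - z i) / Δx)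
      (Ico ((i : ℝ) * Δx) ((i + 1) * Δx)) := by
  obtain ⟨k, rfl⟩ := Nat.exists_eq_add_of_le' hi
  intro ξ hξ
  push_cast at hξ
  have hprev : ξ - Δx ∈ Ico ((k : ℝ) * Δx) ((k + 1) * Δx) :=
    ⟨by linarith [hξ.1], by linarith [hξ.2]⟩
  rw [backwardDiffQuot, hs _ hin ξ (by push_cast; exact hξ), hs k (by omega) _ hprev]

lemma backwardDiffQuot_eqOn_uIoo_cell (hΔ : 0 < Δx) (hs : IsStepFunction Δx n z s)
    {i : ℕ} (hi : 1 ≤ i) (hin : i < n) :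
    EqOn (fun _ => (z (i + 1) - z i) / Δx) (backwardDiffQuot Δx s)
      (uIoo ((i : ℝ) * Δx) ((i + 1) * Δx)) := by
  rw [uIoo_of_le (by nlinarith)]
  exact ((backwardDiffQuot_eqOn_cell hs hi hin).mono Ioo_subset_Ico_self).symm

lemma intervalIntegrable_backwardDiffQuot_cell (hΔ : 0 < Δx) (hs : IsStepFunction Δx n z s)
    {i : ℕ} (hi : 1 ≤ i) (hin : i < n) :
    IntervalIntegrable (backwardDiffQuot Δx s) volume (i * Δx) ((i + 1) * Δx) :=
  intervalIntegrable_const.congr_uIoo (backwardDiffQuot_eqOn_uIoo_cell hΔ hs hi hin)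

lemma integral_backwardDiffQuot_cell (hΔ : 0 < Δx) (hs : IsStepFunction Δx n z s)
    {i : ℕ} (hi : 1 ≤ i) (hin : i < n) :
    ∫ ξ in (i * Δx)..((i + 1) * Δx), backwardDiffQuot Δx s ξ = z (i + 1) - z i := by
  rw [← intervalIntegral.integral_congr_uIoo (backwardDiffQuot_eqOn_uIoo_cell hΔ hs hi hin),
    intervalIntegral.integral_const, smul_eq_mul]
  field_simp
  ring

lemma intervalIntegrable_backwardDiffQuot_sub_sq_cell {w' : ℝ → ℝ} (hΔ : 0 < Δx)
    (hs : IsStepFunction Δx n z s) {i : ℕ} (hi : 1 ≤ i) (hin : i < n)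
    (hw' : IntervalIntegrable w' volume (i * Δx) ((i + 1) * Δx))
    (hw'2 : IntervalIntegrable (fun x => w' x ^ 2) volume (i * Δx) ((i + 1) * Δx)) :
    IntervalIntegrable (fun ξ => (backwardDiffQuot Δx s ξ - w' ξ) ^ 2) volume
      (i * Δx) ((i + 1) * Δx) :=
  (hw'.const_sub_sq ((z (i + 1) - z i) / Δx) hw'2).congr_uIoo fun ξ hξ => by
    simp only [← backwardDiffQuot_eqOn_uIoo_cell hΔ hs hi hin hξ]

lemma integral_backwardDiffQuot_Δx_eq_sub (hΔ : 0 < Δx) (hs : IsStepFunction Δx n z s)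
    {m : ℕ} (hm : 1 ≤ m) (hmn : m ≤ n) :
    ∫ ξ in Δx..(m * Δx), backwardDiffQuot Δx s ξ = z m - z 1 := by
  have hcells := intervalIntegral.sum_integral_adjacent_intervals_Ico (a := fun k : ℕ => k * Δx)
    (f := backwardDiffQuot Δx s) (μ := volume) hm fun k hk => by
      simpa using intervalIntegrable_backwardDiffQuot_cell hΔ hs (mem_Ico.1 hk).1
        ((mem_Ico.1 hk).2.trans_le hmn)
  simp only [Nat.cast_one, one_mul] at hcells
  rw [← hcells, ← Finset.sum_Ico_sub (f := z) hm]
  refine Finset.sum_congr rfl fun k hk => ?_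
  rw [Finset.mem_Ico] at hk
  simpa using integral_backwardDiffQuot_cell hΔ hs hk.1 (hk.2.trans_le hmn)

lemma exists_cell_of_mem_Icc (hΔ : 0 < Δx) (hs : IsStepFunction Δx n z s)
    (hsn : s (n * Δx) = z n) {u : ℝ} (hu : u ∈ Icc Δx (n * Δx)) :
    ∃ m : ℕ, 1 ≤ m ∧ m ≤ n ∧ |u - m * Δx| ≤ Δx ∧ s u = z m := by
  rcases hu.2.eq_or_lt with hun | hun
  · have hn : (1 : ℝ) ≤ n := le_of_mul_le_mul_right (by linarith [hu.1]) hΔ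
    exact ⟨n, by exact_mod_cast hn, le_rfl, by simp [hun, hΔ.le], hun ▸ hsn⟩
  · set i := ⌊u / Δx⌋₊
    have hlo : i * Δx ≤ u :=
      (le_div_iff₀ hΔ).1 (Nat.floor_le (div_nonneg (hΔ.le.trans hu.1) hΔ.le))
    have hhi : u < (i + 1) * Δx := (div_lt_iff₀ hΔ).1 (Nat.lt_floor_add_one _)
    have hin : i < n := by exact_mod_cast lt_of_mul_lt_mul_right (hlo.trans_lt hun) hΔ.le
    have hi : 1 ≤ i := Nat.le_floor (by rw [le_div_iff₀ hΔ]; simpa using hu.1)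
    refine ⟨i + 1, by omega, hin, ?_, hs i hin u ⟨hlo, hhi⟩⟩
    push_cast
    rw [abs_le]
    constructor <;> linarith

lemma intervalIntegrable_backwardDiffQuot (hΔ : 0 < Δx) (hs : IsStepFunction Δx n z s)
    (hn : 1 ≤ n) :
    IntervalIntegrable (backwardDiffQuot Δx s) volume Δx (n * Δx) := by
  simpa using IntervalIntegrable.trans_iterate_Ico (a := fun k : ℕ => k * Δx) hn fun k hk => by
    simpa using intervalIntegrable_backwardDiffQuot_cell hΔ hs (mem_Ico.1 hk).1 (mem_Ico.1 hk).2

lemma intervalIntegrable_backwardDiffQuot_sub_sq {w' : ℝ → ℝ} (hΔ : 0 < Δx)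
    (hs : IsStepFunction Δx n z s) (hn : 1 ≤ n)
    (hw' : IntervalIntegrable w' volume 0 (n * Δx))
    (hw'2 : IntervalIntegrable (fun x => w' x ^ 2) volume 0 (n * Δx)) :
    IntervalIntegrable (fun ξ => (backwardDiffQuot Δx s ξ - w' ξ) ^ 2) volume Δx (n * Δx) := by
  have hsub : ∀ k < n, uIcc ((k : ℝ) * Δx) ((k + 1) * Δx) ⊆ uIcc 0 (n * Δx) := fun k hk => by
    have : (k + 1 : ℝ) ≤ n := by exact_mod_cast hk
    apply uIcc_subset_uIcc <;> rw [mem_uIcc] <;> left <;> constructor <;> nlinarith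
  simpa using IntervalIntegrable.trans_iterate_Ico (a := fun k : ℕ => k * Δx) hn fun k hk => by
    simpa using intervalIntegrable_backwardDiffQuot_sub_sq_cell hΔ hs (mem_Ico.1 hk).1
      (mem_Ico.1 hk).2 (hw'.mono_set (hsub k (mem_Ico.1 hk).2))
      (hw'2.mono_set (hsub k (mem_Ico.1 hk).2))

lemma natCast_mul_mem_Icc (hΔ : 0 < Δx) {m : ℕ} (hm : 1 ≤ m) (hmn : m ≤ n) :
    (m : ℝ) * Δx ∈ Icc Δx (n * Δx) := by
  have hm' : (1 : ℝ) ≤ m := by exact_mod_cast hm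
  have hmn' : (m : ℝ) ≤ n := by exact_mod_cast hmn
  constructor <;> nlinarith

lemma integral_backwardDiffQuot_eq_sub (hΔ : 0 < Δx) (hs : IsStepFunction Δx n z s)
    {j k : ℕ} (hj : 1 ≤ j) (hjn : j ≤ n) (hk : 1 ≤ k) (hkn : k ≤ n) :
    ∫ ξ in (k * Δx)..(j * Δx), backwardDiffQuot Δx s ξ = z j - z k := by
  have hδ := intervalIntegrable_backwardDiffQuot hΔ hs (hj.trans hjn)
  have hΔ_mem : Δx ∈ uIcc Δx (n * Δx) := left_mem_uIcc
  rw [← intervalIntegral.integral_interval_sub_left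
      (hδ.mono_set (uIcc_subset_uIcc hΔ_mem (Icc_subset_uIcc (natCast_mul_mem_Icc hΔ hj hjn))))
      (hδ.mono_set (uIcc_subset_uIcc hΔ_mem (Icc_subset_uIcc (natCast_mul_mem_Icc hΔ hk hkn)))),
    integral_backwardDiffQuot_Δx_eq_sub hΔ hs hj hjn,
    integral_backwardDiffQuot_Δx_eq_sub hΔ hs hk hkn]
  ring

lemma abs_sub_sub_le_of_isStepFunction {w w' : ℝ → ℝ} (hΔ : 0 < Δx)
    (hs : IsStepFunction Δx n z s) (hsn : s (n * Δx) = z n)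
    (hw : ∀ x ∈ Icc 0 (n * Δx), w x = w 0 + ∫ y in (0 : ℝ)..x, w' y)
    (hw' : IntervalIntegrable w' volume 0 (n * Δx))
    (hw'2 : IntervalIntegrable (fun x => w' x ^ 2) volume 0 (n * Δx))
    {x y : ℝ} (hx : x ∈ Icc Δx (n * Δx)) (hy : y ∈ Icc Δx (n * Δx)) :
    |(s x - w x) - (s y - w y)| ≤
      √(n * Δx) * √(∫ ξ in Δx..(n * Δx), (backwardDiffQuot Δx s ξ - w' ξ) ^ 2)
        + 2 * √Δx * √(∫ ξ in (0 : ℝ)..(n * Δx), w' ξ ^ 2) := by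
  obtain ⟨j, hj1, hjn, hxj, hsx⟩ := exists_cell_of_mem_Icc hΔ hs hsn hx
  obtain ⟨k, hk1, hkn, hyk, hsy⟩ := exists_cell_of_mem_Icc hΔ hs hsn hy
  have hn : 1 ≤ n := hj1.trans hjn
  set p := (j : ℝ) * Δx
  set q := (k : ℝ) * Δx
  have hp := natCast_mul_mem_Icc hΔ hj1 hjn
  have hq := natCast_mul_mem_Icc hΔ hk1 hkn
  have hsub : Icc Δx (n * Δx) ⊆ Icc 0 (n * Δx) := Icc_subset_Icc_left hΔ.le
  have hw'_on : ∀ {a b}, a ∈ Icc 0 (n * Δx) → b ∈ Icc 0 (n * Δx) →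
      IntervalIntegrable w' volume a b := fun ha hb =>
    hw'.mono_set (uIcc_subset_uIcc (Icc_subset_uIcc ha) (Icc_subset_uIcc hb))
  have hδ_on : ∀ {a b}, a ∈ Icc Δx (n * Δx) → b ∈ Icc Δx (n * Δx) →
      IntervalIntegrable (backwardDiffQuot Δx s) volume a b := fun ha hb =>
    (intervalIntegrable_backwardDiffQuot hΔ hs hn).mono_set
      (uIcc_subset_uIcc (Icc_subset_uIcc ha) (Icc_subset_uIcc hb))
  have h0_mem : (0 : ℝ) ∈ Icc 0 (n * Δx) := left_mem_Icc.2 (hΔ.le.trans (hx.1.trans hx.2))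
  have hsxy : s x - s y = ∫ ξ in q..p, backwardDiffQuot Δx s ξ := by
    rw [hsx, hsy, integral_backwardDiffQuot_eq_sub hΔ hs hj1 hjn hk1 hkn]
  have hwxy : w x - w y = ∫ ξ in y..x, w' ξ := by
    rw [hw x (hsub hx), hw y (hsub hy), ← intervalIntegral.integral_interval_sub_left
      (hw'_on h0_mem (hsub hx)) (hw'_on h0_mem (hsub hy))]
    ring
  have hdecomp : (s x - w x) - (s y - w y) =
      (∫ ξ in q..p, (backwardDiffQuot Δx s ξ - w' ξ))
        + ((∫ ξ in q..y, w' ξ) - ∫ ξ in p..x, w' ξ) := by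
    rw [intervalIntegral.integral_sub (hδ_on hq hp) (hw'_on (hsub hq) (hsub hp)),
      ← intervalIntegral.integral_interval_sub_interval_comm (hw'_on (hsub hq) (hsub hp))
        (hw'_on (hsub hy) (hsub hx)) (hw'_on (hsub hq) (hsub hy))]
    linarith [hsxy, hwxy]
  have hmain := abs_intervalIntegral_le_sqrt_mul_sqrt_of_uIcc_subset (uIcc_subset_Icc hq hp)
    (ℓ := n * Δx) (abs_le.2 ⟨by linarith [hp.1, hq.2], by linarith [hp.2, hq.1]⟩)
    ((hδ_on hq hp).sub (hw'_on (hsub hq) (hsub hp)))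
    (intervalIntegrable_backwardDiffQuot_sub_sq hΔ hs hn hw' hw'2)
  have hleft := abs_intervalIntegral_le_sqrt_mul_sqrt_of_uIcc_subset
    (uIcc_subset_Icc (hsub hq) (hsub hy)) hyk
    (hw'_on (hsub hq) (hsub hy)) hw'2
  have hright := abs_intervalIntegral_le_sqrt_mul_sqrt_of_uIcc_subset
    (uIcc_subset_Icc (hsub hp) (hsub hx)) hxj
    (hw'_on (hsub hp) (hsub hx)) hw'2
  rw [hdecomp]
  linarith [abs_add_le (∫ ξ in q..p, (backwardDiffQuot Δx s ξ - w' ξ))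
    ((∫ ξ in q..y, w' ξ) - ∫ ξ in p..x, w' ξ),
    abs_sub (∫ ξ in q..y, w' ξ) (∫ ξ in p..x, w' ξ)]

end StepFunction

/-- **Pointwise comparison inequality for the difference between a piecewise constant
function and an H¹ function (inequality (esti4) in the proof of Lemma 4.1).**
Let `n ≥ 2`, `Δx = 1/n`, let `w` be absolutely continuous on `[0,1]` with
`∂ₓw = w' ∈ L²(0,1)` and let `s = ∑_{i=1}^n z_i 1_{V_i}` be piecewise constant on the
cells `V_i = [(i−1)Δx, iΔx)` (`V_n = [(n−1)Δx, 1]`).  With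
`I₂ = ‖δₓs − w'‖_{L²(Δx,1)} + ‖w' − w'(·−Δx)‖_{L²(Δx,1)} + 2 √Δx ‖w'‖_{L²(0,1)}`
one has, for all `x, y ∈ [Δx,1]`,
`|s x − w x|² ≤ |s y − w y|² + I₂ (|s x − w x| + |s y − w y|)`. -/
theorem stmt_16 (n : ℕ) (hn : 2 ≤ n) (Δx : ℝ) (hΔx : Δx = 1 / (n:ℝ))
    (w w' : ℝ → ℝ)
    (hwint : IntervalIntegrable w' volume 0 1)
    (hwAC : ∀ x ∈ Set.Icc (0:ℝ) 1, w x = w 0 + ∫ y in (0:ℝ)..x, w' y)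
    (hw'L2 : IntervalIntegrable (fun x => (w' x)^2) volume 0 1)
    (z : ℕ → ℝ) (s : ℝ → ℝ)
    (hs : ∀ i ∈ Finset.Icc 1 n, ∀ x ∈
        (if i = n then Set.Icc (((i:ℝ) - 1) * Δx) ((i:ℝ) * Δx)
         else Set.Ico (((i:ℝ) - 1) * Δx) ((i:ℝ) * Δx)), s x = z i) :
    ∀ x ∈ Set.Icc Δx 1, ∀ y ∈ Set.Icc Δx 1,
      (s x - w x)^2 ≤ (s y - w y)^2 +
        (Real.sqrt (∫ ξ in Δx..1, ((s ξ - s (ξ - Δx)) / Δx - w' ξ)^2)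
          + Real.sqrt (∫ ξ in Δx..1, (w' ξ - w' (ξ - Δx))^2)
          + 2 * Real.sqrt Δx * Real.sqrt (∫ ξ in (0:ℝ)..1, (w' ξ)^2))
        * (|s x - w x| + |s y - w y|) := by
  intro x hx y hy
  have hn0 : (0 : ℝ) < n := Nat.cast_pos.2 (by omega)
  have hΔ : 0 < Δx := hΔx ▸ one_div_pos.2 hn0
  have hL : (n : ℝ) * Δx = 1 := by rw [hΔx]; field_simp
  have hcells : IsStepFunction Δx n z s := by
    intro i hi ξ hξ
    refine hs (i + 1) (Finset.mem_Icc.2 ⟨by omega, hi⟩) ξ ?_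
    push_cast
    split_ifs
    · simpa using Ico_subset_Icc_self hξ
    · simpa using hξ
  have hlast : s (n * Δx) = z n :=
    hs n (Finset.mem_Icc.2 ⟨by omega, le_rfl⟩) _
      (by rw [if_pos rfl]; exact ⟨by linarith, le_rfl⟩)
  rw [← hL] at hwint hwAC hw'L2 hx hy
  have hkey := abs_sub_sub_le_of_isStepFunction hΔ hcells hlast hwAC hwint hw'L2 hx hy
  rw [hL, Real.sqrt_one, one_mul] at hkey
  refine sq_le_sq_add_mul_of_abs_sub_le (hkey.trans ?_)
  have := Real.sqrt_nonneg (∫ ξ in Δx..1, (w' ξ - w' (ξ - Δx)) ^ 2)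
  unfold backwardDiffQuot
  linarith
end
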